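/- arXiv:2603.14654 — 12 statements merged into one kernel-verified Lean document; each statement's English description precedes it below -/
import Mathlib

section
/- Let A be a finite multiset of elements of an abelian group and let k ≥ 2 be an integer. Then A can be partitioned into k sub-multisets A_1, …, A_k such that |Σ(A_i)| ≥ 2^{1/k - 1}·|Σ(A)|^{1/k} for every 1 ≤ i ≤ k, where Σ(B) denotes the set of all subset sums of B (including the empty sum). -/
/-!
Put `y = (2 |Σ(A)|)^(1/k)` and induct on `k`, keeping `y` fixed. Since adding one element to a
multiset at most doubles `|Σ|`, some `B ≤ A` has `y^(k-1)/2 ≤ |Σ(B)| ≤ y^(k-1)`. Then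
`|Σ(A - B)| ≥ |Σ(A)| / |Σ(B)| ≥ y/2`, and `B` satisfies the inductive hypothesis for `k - 1` parts
with the same `y`. Finally `y/2 = 2^(1/k - 1) |Σ(A)|^(1/k)`.
-/

open Finset Pointwise

namespace Multiset

variable {M : Type*} [AddCommMonoid M] [DecidableEq M]

/-- `Σ(B)` in the paper's notation. -/
def subsetSum (B : Multiset M) : Finset M := (B.powerset.map Multiset.sum).toFinset

lemma mem_subsetSum_iff {B : Multiset M} {a : M} : a ∈ B.subsetSum ↔ ∃ C ≤ B, C.sum = a := by
  simp [subsetSum]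

lemma zero_mem_subsetSum (B : Multiset M) : 0 ∈ B.subsetSum :=
  mem_subsetSum_iff.2 ⟨0, zero_le _, sum_zero⟩

lemma one_le_card_subsetSum (B : Multiset M) : 1 ≤ #B.subsetSum :=
  Finset.card_pos.2 ⟨0, zero_mem_subsetSum B⟩

@[simp] lemma subsetSum_zero : (0 : Multiset M).subsetSum = {0} := by
  ext a; simp [mem_subsetSum_iff, eq_comm]

lemma subsetSum_singleton (a : M) : ({a} : Multiset M).subsetSum = {0, a} := by
  ext x; simp [mem_subsetSum_iff, le_singleton, or_comm, eq_comm]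

lemma subsetSum_add (B C : Multiset M) : (B + C).subsetSum = B.subsetSum + C.subsetSum := by
  ext a
  simp only [Finset.mem_add, mem_subsetSum_iff]
  constructor
  · rintro ⟨D, hD, rfl⟩
    refine ⟨_, ⟨D - C, tsub_le_iff_right.2 hD, rfl⟩, _, ⟨D ∩ C, inter_le_right, rfl⟩, ?_⟩
    rw [← sum_add, sub_add_inter]
  · rintro ⟨_, ⟨D, hD, rfl⟩, _, ⟨E, hE, rfl⟩, rfl⟩
    exact ⟨D + E, add_le_add hD hE, sum_add D E⟩

lemma card_subsetSum_add_le (B C : Multiset M) :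
    #(B + C).subsetSum ≤ #B.subsetSum * #C.subsetSum :=
  subsetSum_add B C ▸ card_add_le

lemma card_subsetSum_cons_le (a : M) (B : Multiset M) :
    #(a ::ₘ B).subsetSum ≤ 2 * #B.subsetSum := by
  rw [← singleton_add]
  refine (card_subsetSum_add_le _ _).trans (Nat.mul_le_mul_right _ ?_)
  rw [subsetSum_singleton]
  exact card_le_two

lemma exists_le_card_subsetSum_le {x : ℝ} (hx : 1 ≤ 2 * x) (A : Multiset M)
    (hA : x ≤ #A.subsetSum) : ∃ B ≤ A, x ≤ #B.subsetSum ∧ (#B.subsetSum : ℝ) ≤ 2 * x := by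
  induction A using Multiset.induction_on with
  | empty => exact ⟨0, le_rfl, hA, by simpa using hx⟩
  | cons a A ih =>
    by_cases h : x ≤ #A.subsetSum
    · obtain ⟨B, hBA, hB⟩ := ih h
      exact ⟨B, hBA.trans (le_cons_self A a), hB⟩
    · refine ⟨a ::ₘ A, le_rfl, hA, ?_⟩
      calc (#(a ::ₘ A).subsetSum : ℝ) ≤ 2 * #A.subsetSum := by
            exact_mod_cast card_subsetSum_cons_le a A
        _ ≤ 2 * x := by linarith [not_le.1 h]

lemma exists_fin_partition_le_two_mul_card_subsetSum (k : ℕ) (A : Multiset M) {y : ℝ}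
    (hy : 1 ≤ y) (hA : y ^ (k + 1) ≤ 2 * #A.subsetSum) :
    ∃ f : Fin (k + 1) → Multiset M, ∑ i, f i = A ∧ ∀ i, y ≤ 2 * #(f i).subsetSum := by
  induction k generalizing A with
  | zero => exact ⟨fun _ => A, Fin.sum_univ_one _, fun _ => by simpa using hA⟩
  | succ k ih =>
    have hyk : y ^ (k + 1) ≤ 2 * #A.subsetSum :=
      (pow_le_pow_right₀ hy k.succ.le_succ).trans hA
    obtain ⟨B, hBA, hB_ge, hB_le⟩ := exists_le_card_subsetSum_le (x := y ^ (k + 1) / 2)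
      (by linarith [one_le_pow₀ (n := k + 1) hy]) A (by linarith)
    obtain ⟨g, hg, hgy⟩ := ih B (by linarith)
    refine ⟨Fin.cons (A - B) g, by rw [Fin.sum_cons, hg, tsub_add_cancel_of_le hBA], ?_⟩
    refine Fin.cases ?_ (fun i => by simpa using hgy i)
    have hsplit : (#A.subsetSum : ℝ) ≤ #B.subsetSum * #(A - B).subsetSum := by
      exact_mod_cast add_tsub_cancel_of_le hBA ▸ card_subsetSum_add_le B (A - B)
    have hpos : 0 < y ^ (k + 1) := by positivity
    -- `#Σ(A) ≤ #Σ(B) · #Σ(A - B)` and `#Σ(B) ≤ y ^ (k + 1)` leave a factor `y / 2` for `A - B`.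
    suffices y * y ^ (k + 1) ≤ 2 * #(A - B).subsetSum * y ^ (k + 1) by
      simpa using le_of_mul_le_mul_right (by linarith) hpos
    calc y * y ^ (k + 1) = y ^ (k + 2) := by ring
      _ ≤ 2 * #A.subsetSum := hA
      _ ≤ 2 * (#B.subsetSum * #(A - B).subsetSum) := by linarith
      _ ≤ 2 * (y ^ (k + 1) * #(A - B).subsetSum) := by
          gcongr
          linarith
      _ = 2 * #(A - B).subsetSum * y ^ (k + 1) := by ring

end Multiset

open Multiset

theorem partition_subset_sums {G : Type*} [AddCommGroup G] [DecidableEq G]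
    (A : Multiset G) (k : ℕ) (hk : 2 ≤ k) :
    ∃ f : Fin k → Multiset G, (∑ i, f i) = A ∧
      ∀ i, (2 : ℝ) ^ ((1 : ℝ) / k - 1) *
          (((A.powerset.map Multiset.sum).toFinset.card : ℝ)) ^ ((1 : ℝ) / k) ≤
        (((f i).powerset.map Multiset.sum).toFinset.card : ℝ) := by
  obtain ⟨m, rfl⟩ : ∃ m, k = m + 1 := ⟨k - 1, by omega⟩
  set s : ℝ := ↑(#A.subsetSum)
  have hs : 1 ≤ 2 * s := by
    have : (1 : ℝ) ≤ s := Nat.one_le_cast.2 (one_le_card_subsetSum A)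
    linarith
  set y := (2 * s) ^ ((1 : ℝ) / (m + 1 : ℕ)) with hy_def
  have hy : 1 ≤ y := Real.one_le_rpow hs (by positivity)
  have hyk : y ^ (m + 1) = 2 * s := by
    rw [hy_def, one_div, Real.rpow_inv_natCast_pow (by linarith) m.succ_ne_zero]
  obtain ⟨f, hf, hfy⟩ := exists_fin_partition_le_two_mul_card_subsetSum m A hy hyk.le
  refine ⟨f, hf, fun i => ?_⟩
  have hlhs : (2 : ℝ) ^ ((1 : ℝ) / (m + 1 : ℕ) - 1) * s ^ ((1 : ℝ) / (m + 1 : ℕ)) = y / 2 := by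
    rw [hy_def, Real.rpow_sub two_pos, Real.rpow_one, Real.mul_rpow zero_le_two (by linarith)]
    ring
  change _ * s ^ _ ≤ (#(f i).subsetSum : ℝ)
  linarith [hfy i]
end

section
/- For every polynomial P of degree k ≥ 1 with integer coefficients, every integer a, and all positive integers N and q, the number of indices 1 ≤ j ≤ N such that a + jq lies in the image P(ℤ) is at most (4τ(q))^{k-1}·N^{1/k}, where τ(q) is the number of positive divisors of q. -/
/-!
Induction on the degree `k`, counting the integers `t` with `P t ∈ {a + j q : 1 ≤ j ≤ N}` rather
than the indices `j`. Fix such a `t₀` and write `P t - P t₀ = (t - t₀) R t` with `deg R = k - 1`.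
For another such `t` with `P t ≠ P t₀`, put `d = gcd (t - t₀) q` and `t - t₀ = d s`; since `s` is
coprime to `q / d`, `R (d s + t₀) = m (q / d)` with `s m = j - j₀`, so `|s| |m| < N`. Either
`|s| ≤ N^(1/k)`, which leaves `2 N^(1/k)` values of `s` for each `d`, or `|m| ≤ N^(1 - 1/k)`, and
then `s` is counted by the degree-`(k-1)` polynomial `s ↦ R (d s + t₀)` on one of two progressions
of difference `q / d` and length `N^(1 - 1/k)`, where the induction hypothesis gives at most
`(4 τ(q))^(k-2) N^(1/k)` values. Summing over the `τ(q)` divisors `d`, plus the at most `k` roots of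
`P - P t₀`, gives the bound.
-/

open Polynomial

noncomputable def preimageAP (P : ℤ[X]) (a : ℤ) (q N : ℕ) : Finset ℤ :=
  (Finset.Icc 1 N).biUnion fun j => (P - C (a + j * q)).roots.toFinset

lemma sub_C_ne_zero_of_natDegree_ne_zero {R : Type*} [Ring R] {P : R[X]} (hP : P.natDegree ≠ 0)
    (c : R) : P - C c ≠ 0 := by
  intro h
  rw [← natDegree_sub_C (a := c), h, natDegree_zero] at hP
  exact hP rfl

lemma card_roots_toFinset_sub_C_le {R : Type*} [CommRing R] [IsDomain R] [DecidableEq R]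
    (P : R[X]) (c : R) :
    (P - C c).roots.toFinset.card ≤ P.natDegree :=
  calc (P - C c).roots.toFinset.card ≤ Multiset.card (P - C c).roots := Multiset.toFinset_card_le _
    _ ≤ (P - C c).natDegree := card_roots' _
    _ = P.natDegree := natDegree_sub_C

lemma mem_preimageAP {P : ℤ[X]} (hP : P.natDegree ≠ 0) {a : ℤ} {q N : ℕ} {t : ℤ} :
    t ∈ preimageAP P a q N ↔ ∃ j ∈ Finset.Icc 1 N, P.eval t = a + j * q := by
  simp only [preimageAP, Finset.mem_biUnion, Multiset.mem_toFinset, mem_roots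
    (sub_C_ne_zero_of_natDegree_ne_zero hP _), IsRoot.def, eval_sub, eval_C, sub_eq_zero]

lemma card_preimageAP_le (P : ℤ[X]) (a : ℤ) (q N : ℕ) :
    (preimageAP P a q N).card ≤ N * P.natDegree :=
  calc (preimageAP P a q N).card
      ≤ ∑ j ∈ Finset.Icc 1 N, (P - C (a + j * q)).roots.toFinset.card := Finset.card_biUnion_le
    _ ≤ ∑ _j ∈ Finset.Icc 1 N, P.natDegree :=
      Finset.sum_le_sum fun j _ => card_roots_toFinset_sub_C_le P _
    _ = N * P.natDegree := by simp

-- As in the theorem, `Finset.Icc 1 N` elaborates to its image in `ℤ` through the `Finset` monad.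
open scoped Classical in
lemma card_filter_le_card_preimageAP {P : ℤ[X]} (hP : P.natDegree ≠ 0) (a : ℤ) {q : ℕ}
    (hq : 0 < q) (N : ℕ) :
    ((Finset.Icc 1 N).filter fun j => ∃ t : ℤ, P.eval t = a + (j : ℤ) * (q : ℤ)).card ≤
      (preimageAP P a q N).card := by
  refine Finset.card_le_card_of_surjOn (fun t => (P.eval t - a) / q) ?_
  intro j hj
  simp only [Finset.coe_filter, Set.mem_ofPred_eq, Finset.bind_def, Finset.sup_singleton_apply,
    Finset.pure_def, Finset.mem_image] at hj
  obtain ⟨⟨n, hn, rfl⟩, t, ht⟩ := hj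
  refine ⟨t, (mem_preimageAP hP).2 ⟨n, hn, ht⟩, ?_⟩
  simp [ht, hq.ne']

lemma Int.exists_mem_divisors_isCoprime (x : ℤ) {q : ℕ} (hq : 0 < q) :
    ∃ d ∈ q.divisors, ∃ s : ℤ, x = d * s ∧ IsCoprime s (q / d : ℕ) := by
  have hg : 0 < Int.gcd x q := Int.gcd_pos_of_ne_zero_right _ (by exact_mod_cast hq.ne')
  have hdvd : Int.gcd x q ∣ q := by exact_mod_cast Int.gcd_dvd_right x q
  refine ⟨Int.gcd x q, Nat.mem_divisors.2 ⟨hdvd, hq.ne'⟩, x / Int.gcd x q,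
    (Int.mul_ediv_cancel' (Int.gcd_dvd_left _ _)).symm, ?_⟩
  rw [Int.isCoprime_iff_gcd_eq_one, Int.natCast_div]
  exact Int.gcd_div_gcd_div_gcd hg

lemma mem_preimageAP_union_of_eval_eq {L : ℤ[X]} (hL : L.natDegree ≠ 0) {s m : ℤ} {q M : ℕ}
    (h : L.eval s = m * q) (hm0 : m ≠ 0) (hmM : m.natAbs ≤ M) :
    s ∈ preimageAP L 0 q M ∪ preimageAP L (-(M + 1) * q) q M := by
  rw [Finset.mem_union, mem_preimageAP hL, mem_preimageAP hL]
  rcases hm0.lt_or_gt with hneg | hpos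
  · right
    refine ⟨(m + M + 1).toNat, Finset.mem_Icc.2 ⟨by omega, by omega⟩, ?_⟩
    rw [h, Int.toNat_of_nonneg (by omega)]
    ring
  · left
    refine ⟨m.toNat, Finset.mem_Icc.2 ⟨by omega, by omega⟩, ?_⟩
    rw [h, Int.toNat_of_nonneg hpos.le]
    ring

lemma exists_mem_divisors_eval_eq {P : ℤ[X]} {t₀ t n : ℤ} {q : ℕ} (hq : 0 < q) (L : ℕ → ℤ[X])
    (hL : ∀ (d : ℕ) (s : ℤ), d * s * (L d).eval s = P.eval (d * s + t₀) - P.eval t₀)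
    (ht : P.eval t - P.eval t₀ = n * q) :
    ∃ d ∈ q.divisors, ∃ s m : ℤ, t = d * s + t₀ ∧ (L d).eval s = m * (q / d : ℕ) ∧ s * m = n := by
  obtain ⟨d, hd, s, hts, hcop⟩ := Int.exists_mem_divisors_isCoprime (t - t₀) hq
  have hd0 : (d : ℤ) ≠ 0 := by exact_mod_cast (Nat.pos_of_mem_divisors hd).ne'
  have hqd : (d : ℤ) * (q / d : ℕ) = q := by
    exact_mod_cast Nat.mul_div_cancel' (Nat.dvd_of_mem_divisors hd)
  have hq' : ((q / d : ℕ) : ℤ) ≠ 0 := by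
    exact_mod_cast (Nat.div_pos (Nat.divisor_le hd) (Nat.pos_of_mem_divisors hd)).ne'
  obtain rfl : t = d * s + t₀ := by linarith
  have hsL : s * (L d).eval s = n * (q / d : ℕ) := by
    apply mul_left_cancel₀ hd0
    linear_combination hL d s + ht - n * hqd
  obtain ⟨m, hm⟩ := hcop.symm.dvd_of_dvd_mul_left ⟨n, by rw [hsL, mul_comm]⟩
  refine ⟨d, hd, s, m, rfl, by rw [hm, mul_comm], mul_left_cancel₀ hq' ?_⟩
  rw [hm] at hsL
  linear_combination hsL

lemma preimageAP_subset {P : ℤ[X]} (hP : P.natDegree ≠ 0) {a t₀ : ℤ} {q N : ℕ} (hq : 0 < q)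
    (ht₀ : t₀ ∈ preimageAP P a q N) (L : ℕ → ℤ[X]) (hL0 : ∀ d ∈ q.divisors, (L d).natDegree ≠ 0)
    (hL : ∀ (d : ℕ) (s : ℤ), d * s * (L d).eval s = P.eval (d * s + t₀) - P.eval t₀)
    {u M : ℕ} (hM : (N - 1) / (u + 1) ≤ M) :
    preimageAP P a q N ⊆ (P - C (P.eval t₀)).roots.toFinset ∪ q.divisors.biUnion fun d =>
      ((Finset.Icc (-(u : ℤ)) u).erase 0 ∪ (preimageAP (L d) 0 (q / d) M ∪
        preimageAP (L d) (-(M + 1) * (q / d : ℕ)) (q / d) M)).image fun s => d * s + t₀ := by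
  obtain ⟨j₀, hj₀, hPt₀⟩ := (mem_preimageAP hP).1 ht₀
  intro t ht
  obtain ⟨j, hj, hPt⟩ := (mem_preimageAP hP).1 ht
  by_cases hz : P.eval t = P.eval t₀
  · refine Finset.mem_union_left _ ?_
    rw [Multiset.mem_toFinset, mem_roots (sub_C_ne_zero_of_natDegree_ne_zero hP _)]
    simp [hz]
  obtain ⟨d, hd, s, m, htd, hLs, hsm⟩ :=
    exists_mem_divisors_eval_eq (n := j - j₀) hq L hL (by rw [hPt, hPt₀]; ring)
  have hjj₀ : (j : ℤ) ≠ j₀ := fun h => hz (by rw [hPt, hPt₀, h])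
  have hm0 : m ≠ 0 := by rintro rfl; omega
  have hsmN : m.natAbs * s.natAbs ≤ N - 1 := by
    rw [mul_comm, ← Int.natAbs_mul, hsm]
    simp only [Finset.mem_Icc] at hj hj₀
    omega
  refine Finset.mem_union_right _ <|
    Finset.mem_biUnion.2 ⟨d, hd, Finset.mem_image.2 ⟨s, ?_, htd.symm⟩⟩
  by_cases hsu : s.natAbs ≤ u
  · have hs0 : s ≠ 0 := by rintro rfl; omega
    exact Finset.mem_union_left _ (by simp only [Finset.mem_erase, Finset.mem_Icc]; omega)
  refine Finset.mem_union_right _ (mem_preimageAP_union_of_eval_eq (hL0 d hd) hLs hm0 ?_)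
  refine le_trans ?_ hM
  rw [Nat.le_div_iff_mul_le (Nat.succ_pos u)]
  exact le_trans (Nat.mul_le_mul_left _ (by omega)) hsmN

lemma card_Icc_neg_erase_zero (u : ℕ) : ((Finset.Icc (-(u : ℤ)) u).erase 0).card = 2 * u := by
  rw [Finset.card_erase_of_mem (by simp), Int.card_Icc]
  omega

lemma card_preimageAP_le_sum {P : ℤ[X]} (hP : P.natDegree ≠ 0) {a t₀ : ℤ} {q N : ℕ} (hq : 0 < q)
    (ht₀ : t₀ ∈ preimageAP P a q N) (L : ℕ → ℤ[X]) (hL0 : ∀ d ∈ q.divisors, (L d).natDegree ≠ 0)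
    (hL : ∀ (d : ℕ) (s : ℤ), d * s * (L d).eval s = P.eval (d * s + t₀) - P.eval t₀)
    {u M : ℕ} (hM : (N - 1) / (u + 1) ≤ M) :
    (preimageAP P a q N).card ≤ P.natDegree + ∑ d ∈ q.divisors, (2 * u +
      ((preimageAP (L d) 0 (q / d) M).card +
        (preimageAP (L d) (-(M + 1) * (q / d : ℕ)) (q / d) M).card)) := by
  refine (Finset.card_le_card (preimageAP_subset hP hq ht₀ L hL0 hL hM)).trans ?_
  refine (Finset.card_union_le _ _).trans (add_le_add (card_roots_toFinset_sub_C_le P _)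
    (Finset.card_biUnion_le.trans (Finset.sum_le_sum fun d _ => Finset.card_image_le.trans ?_)))
  exact (Finset.card_union_le _ _).trans
    (add_le_add (card_Icc_neg_erase_zero u).le (Finset.card_union_le _ _))

lemma card_preimageAP_le_of_forall_le {P : ℤ[X]} {k : ℕ} (hk : 0 < k)
    (hdeg : P.natDegree = k + 1) (a : ℤ) {q : ℕ} (hq : 0 < q) (N : ℕ) {u M : ℕ}
    (hM : (N - 1) / (u + 1) ≤ M) {B : ℝ}
    (hB : ∀ L : ℤ[X], L.natDegree = k → ∀ (b : ℤ), ∀ d ∈ q.divisors,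
      ((preimageAP L b (q / d) M).card : ℝ) ≤ B) :
    ((preimageAP P a q N).card : ℝ) ≤ k + 1 + q.divisors.card * (2 * u + 2 * B) := by
  have hB0 : 0 ≤ B := (Nat.cast_nonneg _).trans
    (hB (X ^ k) (natDegree_X_pow k) 0 1 (Nat.one_mem_divisors.2 hq.ne'))
  rcases (preimageAP P a q N).eq_empty_or_nonempty with hT | ⟨t₀, ht₀⟩
  · rw [hT, Finset.card_empty, Nat.cast_zero]
    positivity
  set R := (P - C (P.eval t₀)) /ₘ (X - C t₀)
  have hR : (X - C t₀) * R = P - C (P.eval t₀) := mul_divByMonic_eq_iff_isRoot.2 (by simp)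
  have hRdeg : R.natDegree = k := by
    rw [natDegree_divByMonic _ (monic_X_sub_C t₀), natDegree_sub_C, hdeg, natDegree_X_sub_C,
      Nat.add_sub_cancel]
  set L : ℕ → ℤ[X] := fun d => R.comp (C (d : ℤ) * X + C t₀)
  have hLdeg : ∀ d ∈ q.divisors, (L d).natDegree = k := fun d hd => by
    rw [natDegree_comp, natDegree_linear (by exact_mod_cast (Nat.pos_of_mem_divisors hd).ne'),
      hRdeg, mul_one]
  have hL : ∀ (d : ℕ) (s : ℤ), d * s * (L d).eval s = P.eval (d * s + t₀) - P.eval t₀ := by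
    intro d s
    simpa [L, eval_comp] using congrArg (eval (d * s + t₀)) hR
  have hcard : ((preimageAP P a q N).card : ℝ) ≤ k + 1 + ∑ d ∈ q.divisors, (2 * u +
      ((preimageAP (L d) 0 (q / d) M).card +
        (preimageAP (L d) (-(M + 1) * (q / d : ℕ)) (q / d) M).card) : ℝ) := by
    exact_mod_cast hdeg ▸ card_preimageAP_le_sum (by omega) hq ht₀ L
      (fun d hd => by rw [hLdeg d hd]; omega) hL hM
  refine hcard.trans ?_
  rw [← nsmul_eq_mul, ← Finset.sum_const]
  gcongr with d hd
  linarith [hB (L d) (hLdeg d hd) 0 d hd, hB (L d) (hLdeg d hd) (-(M + 1) * (q / d : ℕ)) d hd]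

lemma three_mul_sub_two_le_four_pow (k : ℕ) (hk : 1 ≤ k) : 3 * (k : ℝ) - 2 ≤ 4 ^ (k - 1) := by
  have := one_add_mul_le_pow (show (-2 : ℝ) ≤ 3 by norm_num) (k - 1)
  rw [Nat.cast_sub hk] at this
  norm_num at this
  linarith

lemma induction_step_estimate {k u M : ℕ} (hk : 1 ≤ k) {τ X : ℝ} (hτ : 1 ≤ τ) (hX : 1 ≤ X)
    (huX : (u : ℝ) ≤ X) (hXu : X < u + 1) (hM : (M : ℝ) * (u + 1) ≤ X ^ (k + 1) - 1) :
    (k + 1 : ℝ) + τ * (2 * u + 2 * ((4 * τ) ^ (k - 1) * (M : ℝ) ^ ((1 : ℝ) / k))) ≤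
      (4 * τ) ^ k * X := by
  obtain rfl | hk2 : k = 1 ∨ 2 ≤ k := by omega
  · -- `(u + 1 - X) ^ 2 ≤ 1` gives `u + 1 + M ≤ 2 X`
    have hsq : ((u : ℝ) + 1 - X) ^ 2 ≤ 1 := by nlinarith
    have hsum : (u : ℝ) + 1 + M ≤ 2 * X := by
      refine le_of_mul_le_mul_right ?_ (by positivity : (0 : ℝ) < u + 1)
      norm_num at hM
      nlinarith
    norm_num
    nlinarith
  set G := (4 * τ) ^ (k - 1)
  have hW : (M : ℝ) ^ ((1 : ℝ) / k) ≤ X := by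
    have hMX : (M : ℝ) ≤ X ^ k := by
      refine le_of_mul_le_mul_right ?_ (by positivity : (0 : ℝ) < u + 1)
      have : X ^ (k + 1) ≤ X ^ k * (u + 1) := by
        rw [pow_succ]; exact mul_le_mul_of_nonneg_left hXu.le (by positivity)
      linarith
    calc (M : ℝ) ^ ((1 : ℝ) / k) ≤ (X ^ k) ^ ((1 : ℝ) / k) :=
          Real.rpow_le_rpow (by positivity) hMX (by positivity)
      _ = X := by rw [one_div]; exact Real.pow_rpow_inv_natCast (by linarith) (by omega)
  have hG : 3 * (k : ℝ) - 2 ≤ G :=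
    (three_mul_sub_two_le_four_pow k hk).trans (pow_le_pow_left₀ (by norm_num) (by linarith) _)
  have hτX : 1 ≤ τ * X := by nlinarith
  rw [← pow_sub_one_mul (by omega : k ≠ 0)]
  have : (2 : ℝ) ≤ k := by exact_mod_cast hk2
  nlinarith [mul_le_mul_of_nonneg_left hW (by positivity : (0 : ℝ) ≤ τ * G)]

lemma card_preimageAP_le_succ {k : ℕ} (hk : 1 ≤ k)
    (IH : ∀ L : ℤ[X], L.natDegree = k → ∀ (a : ℤ) (q N : ℕ), 0 < q →
      ((preimageAP L a q N).card : ℝ) ≤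
        (4 * (q.divisors.card : ℝ)) ^ (k - 1) * (N : ℝ) ^ ((1 : ℝ) / k))
    {P : ℤ[X]} (hdeg : P.natDegree = k + 1) (a : ℤ) {q : ℕ} (hq : 0 < q) (N : ℕ) :
    ((preimageAP P a q N).card : ℝ) ≤
      (4 * (q.divisors.card : ℝ)) ^ (k + 1 - 1) * (N : ℝ) ^ ((1 : ℝ) / (k + 1 : ℕ)) := by
  rcases N.eq_zero_or_pos with rfl | hN
  · simp only [preimageAP, Finset.Icc_eq_empty_of_lt zero_lt_one, Finset.biUnion_empty,
      Finset.card_empty, Nat.cast_zero]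
    positivity
  set τ : ℝ := (q.divisors.card : ℝ)
  set X : ℝ := (N : ℝ) ^ ((1 : ℝ) / (k + 1 : ℕ))
  set u := ⌊X⌋₊
  set M := (N - 1) / (u + 1)
  have hτ : 1 ≤ τ := Nat.one_le_cast.2 (Finset.card_pos.2 (Nat.nonempty_divisors.2 hq.ne'))
  have hX : 1 ≤ X := Real.one_le_rpow (by exact_mod_cast hN) (by positivity)
  have hM : (M : ℝ) * (u + 1) ≤ X ^ (k + 1) - 1 := by
    rw [show X ^ (k + 1) = N from by
      simp only [X, one_div]; exact Real.rpow_inv_natCast_pow (by positivity) (by omega)]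
    rw [← Nat.cast_pred hN]
    exact_mod_cast Nat.div_mul_le_self (N - 1) (u + 1)
  have hpiece : ∀ L : ℤ[X], L.natDegree = k → ∀ (b : ℤ), ∀ d ∈ q.divisors,
      ((preimageAP L b (q / d) M).card : ℝ) ≤ (4 * τ) ^ (k - 1) * (M : ℝ) ^ ((1 : ℝ) / k) := by
    intro L hL b d hd
    have hqd : 0 < q / d := Nat.div_pos (Nat.divisor_le hd) (Nat.pos_of_mem_divisors hd)
    refine (IH L hL b (q / d) M hqd).trans ?_
    gcongr
    exact Nat.cast_le.2 <| Finset.card_le_card (Nat.divisors_subset_of_dvd hq.ne'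
      (Nat.div_dvd_of_dvd (Nat.dvd_of_mem_divisors hd)))
  calc ((preimageAP P a q N).card : ℝ)
      ≤ k + 1 + τ * (2 * u + 2 * ((4 * τ) ^ (k - 1) * (M : ℝ) ^ ((1 : ℝ) / k))) :=
        card_preimageAP_le_of_forall_le hk hdeg a hq N le_rfl hpiece
    _ ≤ (4 * τ) ^ k * X :=
        induction_step_estimate hk hτ hX (Nat.floor_le (by positivity)) (Nat.lt_floor_add_one X) hM
    _ = (4 * τ) ^ (k + 1 - 1) * X := by rw [Nat.add_sub_cancel]

lemma card_preimageAP_le_rpow {P : ℤ[X]} {k : ℕ} (hk : 1 ≤ k) (hdeg : P.natDegree = k) (a : ℤ)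
    {q : ℕ} (hq : 0 < q) (N : ℕ) :
    ((preimageAP P a q N).card : ℝ) ≤
      (4 * (q.divisors.card : ℝ)) ^ (k - 1) * (N : ℝ) ^ ((1 : ℝ) / k) := by
  induction k, hk using Nat.le_induction generalizing P a q N with
  | base => simpa using (card_preimageAP_le P a q N).trans (by rw [hdeg, mul_one])
  | succ k hk IH =>
    exact card_preimageAP_le_succ hk (fun L hL a q N hq => IH hL a hq N) hdeg a hq N

open scoped Classical in
theorem polynomial_values_in_ap_general (P : Polynomial ℤ) (k : ℕ) (hk : 1 ≤ k)
    (hdeg : P.natDegree = k) (a : ℤ) (N q : ℕ) (hq : 0 < q) :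
    (((Finset.Icc 1 N).filter
        (fun j => ∃ t : ℤ, P.eval t = a + (j : ℤ) * (q : ℤ))).card : ℝ)
      ≤ (4 * (q.divisors.card : ℝ)) ^ (k - 1) * (N : ℝ) ^ ((1 : ℝ) / k) :=
  le_trans (by exact_mod_cast card_filter_le_card_preimageAP (by omega) a hq N)
    (card_preimageAP_le_rpow hk hdeg a hq N)

open scoped Classical in
theorem polynomial_values_in_ap (P : Polynomial ℤ) (k : ℕ) (hk : 1 ≤ k)
    (hdeg : P.natDegree = k) (a : ℤ) (N q : ℕ) (hN : 0 < N) (hq : 0 < q) :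
    (((Finset.Icc 1 N).filter
        (fun j => ∃ t : ℤ, P.eval t = a + (j : ℤ) * (q : ℤ))).card : ℝ)
      ≤ (4 * (q.divisors.card : ℝ)) ^ (k - 1) * (N : ℝ) ^ ((1 : ℝ) / k) :=
  polynomial_values_in_ap_general P k hk hdeg a N q hq
end

section
/- Let k ≥ 2 and N ≥ 1. Define Q_k(N; q, a) as the number of k-th powers among a+q, a+2q, …, a+Nq. If a ∈ ℤ and q ≥ 1 satisfy gcd(a,q) > 1 and Q_k(N;q,a) ≥ 2, then there exist a' ∈ ℤ and q' ≥ 1 with Q_k(N;q,a) ≤ Q_k(N;q',a') and gcd(a',q') < gcd(a,q). -/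
/-!
Let `p` be a prime dividing `gcd(a, q)`. Every `k`-th power `a + jq` is then divisible by `p^k`,
so two such indices `j, j'` satisfy `p^k ∣ (j - j') q`: all of them lie in one residue class
`j₀ + r ℤ`, where `r = p^k / gcd(p^k, q)`. Writing `j = j₀ + s r` and `q = q₀ gcd(p^k, q)`, we get
`a + jq = p^k (A + s q₀)`, and `A + s q₀` is again a `k`-th power. So the progression with
modulus `q₀ < q` contains at least as many `k`-th powers, and descent on `q` reaches `gcd = 1`.
-/

open Finset

open scoped Classical in
noncomputable def apPowerIndices (k N : ℕ) (a q : ℤ) : Finset ℤ :=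
  (Icc 1 (N : ℤ)).filter (fun j => ∃ x : ℤ, x ^ k = a + j * q)

open scoped Classical in
/-- Here `j` ranges over `ℤ`, so `Icc 1 N : Finset ℕ` is lifted to `Finset ℤ` through the
`Finset` monad. -/
theorem filter_Icc_eq_apPowerIndices (k N : ℕ) (a q : ℤ) :
    (Icc 1 N).filter (fun j => ∃ x : ℤ, x ^ k = a + (j : ℤ) * q) = apPowerIndices k N a q := by
  ext j
  simp only [apPowerIndices, pure_def, bind_def, sup_singleton_apply, mem_filter, mem_image,
    mem_Icc]
  refine and_congr_left fun _ => ⟨?_, fun h => ⟨j.toNat, by omega, by omega⟩⟩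
  rintro ⟨n, hn, rfl⟩
  omega

section

variable {k N : ℕ} {a q j : ℤ}

theorem mem_apPowerIndices :
    j ∈ apPowerIndices k N a q ↔ (1 ≤ j ∧ j ≤ N) ∧ ∃ x : ℤ, x ^ k = a + j * q := by
  simp [apPowerIndices]

theorem exists_pow_eq_of_prime_pow_mul_eq_pow {M : Type*} [CommMonoidWithZero M]
    [IsCancelMulZero M] {p b x : M} (hp : Prime p) (h : p ^ k * b = x ^ k) : ∃ y, y ^ k = b := by
  rcases eq_or_ne k 0 with rfl | hk
  · exact ⟨1, by simpa using h.symm⟩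
  obtain ⟨y, rfl⟩ : p ∣ x := hp.dvd_of_dvd_pow (h ▸ dvd_mul_of_dvd_left (dvd_pow_self p hk) b)
  exact ⟨y, mul_left_cancel₀ (pow_ne_zero k hp.ne_zero) (by rw [h, mul_pow])⟩

theorem pow_dvd_of_mem_apPowerIndices {p : ℤ} (hp : Prime p) (hpa : p ∣ a) (hpq : p ∣ q)
    (hj : j ∈ apPowerIndices k N a q) : p ^ k ∣ a + j * q := by
  obtain ⟨x, hx⟩ := (mem_apPowerIndices.mp hj).2
  rw [← hx]
  exact pow_dvd_pow_of_dvd (hp.dvd_of_dvd_pow (hx ▸ dvd_add hpa (dvd_mul_of_dvd_right hpq _))) k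

theorem exists_card_apPowerIndices_le {p : ℤ} (hp : Prime p) (hpa : p ∣ a) (hpq : p ∣ q)
    {r q₀ : ℤ} (hr : 0 < r) (hrq : r * q = p ^ k * q₀) (hcop : IsCoprime r q₀) :
    ∃ a', #(apPowerIndices k N a q) ≤ #(apPowerIndices k N a' q₀) := by
  rcases (apPowerIndices k N a q).eq_empty_or_nonempty with hS | hS
  · exact ⟨a, by simp [hS]⟩
  obtain ⟨j₀, hj₀, hmin⟩ := (apPowerIndices k N a q).exists_min_image id hS
  obtain ⟨A, hA⟩ := pow_dvd_of_mem_apPowerIndices hp hpa hpq hj₀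
  -- `a + (j₀ + r s) q = p^k (A + s q₀)`, so the index `j₀ + r s` is hit by the index `s + 1`
  -- of the progression `(A - q₀) + t q₀`.
  refine ⟨A - q₀, card_le_card_of_surjOn (fun t => j₀ + (t - 1) * r) ?_⟩
  intro j hj
  obtain ⟨s, hs⟩ : r ∣ j - j₀ := by
    obtain ⟨c, hc⟩ := dvd_sub (pow_dvd_of_mem_apPowerIndices hp hpa hpq hj) ⟨A, hA⟩
    have : (j - j₀) * q₀ = r * c := mul_left_cancel₀ (pow_ne_zero k hp.ne_zero)
      (by linear_combination r * hc - (j - j₀) * hrq)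
    exact hcop.dvd_of_dvd_mul_right ⟨c, this⟩
  have hj₀j : j₀ ≤ j := hmin j hj
  have hs0 : 0 ≤ s := nonneg_of_mul_nonneg_right (by linarith) hr
  obtain ⟨⟨hj₁, hjN⟩, x, hx⟩ := mem_apPowerIndices.mp hj
  obtain ⟨⟨hj₀₁, -⟩, -⟩ := mem_apPowerIndices.mp hj₀
  refine ⟨s + 1, mem_apPowerIndices.mpr ⟨⟨by omega, by nlinarith⟩, ?_⟩, by simp; linarith⟩
  refine exists_pow_eq_of_prime_pow_mul_eq_pow hp (x := x) ?_
  rw [hx, show j = j₀ + r * s by linarith]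
  linear_combination -hA - s * hrq

theorem exists_lt_card_apPowerIndices_le (hk : k ≠ 0) (hq : 0 < q) (hgcd : Int.gcd a q ≠ 1) :
    ∃ a' q', 0 < q' ∧ q' < q ∧ #(apPowerIndices k N a q) ≤ #(apPowerIndices k N a' q') := by
  obtain ⟨p, hp, hpg⟩ := Nat.exists_prime_and_dvd hgcd
  have hpZ : Prime (p : ℤ) := Nat.prime_iff_prime_int.mp hp
  have hpa : (p : ℤ) ∣ a := (Int.natCast_dvd_natCast.mpr hpg).trans (Int.gcd_dvd_left a q)
  have hpq : (p : ℤ) ∣ q := (Int.natCast_dvd_natCast.mpr hpg).trans (Int.gcd_dvd_right a q)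
  obtain ⟨g, r, q₀, hg, hcop, hpk, hq₀⟩ :=
    Int.exists_gcd_one' (m := (p : ℤ) ^ k) (Int.gcd_pos_of_ne_zero_right _ hq.ne')
  have hg1 : g ≠ 1 := by
    rintro rfl
    rw [Nat.cast_one, mul_one] at hpk hq₀
    subst hpk hq₀
    exact hpZ.not_isUnit <|
      (Int.isCoprime_iff_gcd_eq_one.mpr hcop).isUnit_of_dvd' (dvd_pow_self _ hk) hpq
  have hr : 0 < r :=
    pos_of_mul_pos_left (hpk ▸ pow_pos (by exact_mod_cast hp.pos) k) (by positivity)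
  have hq₀pos : 0 < q₀ := pos_of_mul_pos_left (hq₀ ▸ hq) (by positivity)
  obtain ⟨a', hcard⟩ := exists_card_apPowerIndices_le (N := N) hpZ hpa hpq hr
    (by rw [hpk, hq₀]; ring) (Int.isCoprime_iff_gcd_eq_one.mpr hcop)
  have hg2 : (2 : ℤ) ≤ g := by omega
  exact ⟨a', q₀, hq₀pos, by nlinarith, hcard⟩

end

theorem exists_gcd_eq_one_card_apPowerIndices_le {k N : ℕ} {a q : ℤ} (hk : k ≠ 0) (hq : 0 < q) :
    ∃ a' q', 0 < q' ∧ #(apPowerIndices k N a q) ≤ #(apPowerIndices k N a' q') ∧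
      Int.gcd a' q' = 1 := by
  by_cases hgcd : Int.gcd a q = 1
  · exact ⟨a, q, hq, le_rfl, hgcd⟩
  obtain ⟨a₁, q₁, hq₁, hlt, hcard₁⟩ := exists_lt_card_apPowerIndices_le (N := N) hk hq hgcd
  obtain ⟨a', q', hq', hcard', hcop⟩ := exists_gcd_eq_one_card_apPowerIndices_le (N := N) hk hq₁
  exact ⟨a', q', hq', hcard₁.trans hcard', hcop⟩
termination_by q.toNat
decreasing_by omega

open scoped Classical in
theorem kth_powers_in_ap_reduce_gcd_general (k N : ℕ) (hk : 2 ≤ k)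
    (a q : ℤ) (hq : 1 ≤ q) (hgcd : 1 < Int.gcd a q) :
    ∃ (a' q' : ℤ), 1 ≤ q' ∧
      ((Finset.Icc 1 N).filter (fun j => ∃ x : ℤ, x ^ k = a + (j : ℤ) * q)).card ≤
        ((Finset.Icc 1 N).filter (fun j => ∃ x : ℤ, x ^ k = a' + (j : ℤ) * q')).card ∧
      Int.gcd a' q' < Int.gcd a q := by
  obtain ⟨a', q', hq', hcard, hcop⟩ :=
    exists_gcd_eq_one_card_apPowerIndices_le (N := N) (a := a) (by omega : k ≠ 0) hq
  refine ⟨a', q', hq', ?_, hcop ▸ hgcd⟩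
  simpa only [filter_Icc_eq_apPowerIndices] using hcard

open scoped Classical in
theorem kth_powers_in_ap_reduce_gcd (k N : ℕ) (hk : 2 ≤ k) (hN : 1 ≤ N)
    (a q : ℤ) (hq : 1 ≤ q) (hgcd : 1 < Int.gcd a q)
    (hQ : 2 ≤ ((Finset.Icc 1 N).filter
        (fun j => ∃ x : ℤ, x ^ k = a + (j : ℤ) * q)).card) :
    ∃ (a' q' : ℤ), 1 ≤ q' ∧
      ((Finset.Icc 1 N).filter (fun j => ∃ x : ℤ, x ^ k = a + (j : ℤ) * q)).card ≤
        ((Finset.Icc 1 N).filter (fun j => ∃ x : ℤ, x ^ k = a' + (j : ℤ) * q')).card ∧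
      Int.gcd a' q' < Int.gcd a q :=
  kth_powers_in_ap_reduce_gcd_general k N hk a q hq hgcd
end

section
/- Let p be a prime, a_0 ∈ ℤ/p²ℤ, and let A be a finite multiset of elements of ℤ/p²ℤ \ {0, p, 2p, …, (p-1)p} such that the translate a_0 + Σ*(A) is disjoint from {p, 2p, …, (p-1)p} in ℤ/p²ℤ. Then A does not contain a sub-multiset b_1p+θ, …, b_{2p+1}p+θ of size 2p+1 with 1 ≤ θ ≤ p-1 and 0 ≤ b_i ≤ p-1; that is, no residue class modulo p occurs in A with multiplicity 2p+1 or more. Equivalently, α(2p+1) = 0, where α(m) counts the residues mod p represented at least m times in A. -/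
private lemma multiset_exists_le_card {α : Type*} (s : Multiset α) :
    ∀ n : ℕ, n ≤ Multiset.card s → ∃ t ≤ s, Multiset.card t = n := by
  induction s using Multiset.induction with
  | empty =>
    intro n hn
    simp at hn
    exact ⟨0, le_refl _, by simp [hn]⟩
  | cons a s ih =>
    intro n hn
    rcases n with _ | m
    · exact ⟨0, Multiset.zero_le _, rfl⟩
    · simp at hn
      obtain ⟨t, ht, hcard⟩ := ih m hn
      exact ⟨a ::ₘ t, Multiset.cons_le_cons a ht, by simp [hcard]⟩

private lemma mult_of_p_iff (p : ℕ) (hp : p.Prime) (x : ZMod (p ^ 2)) :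
    (∃ y : ZMod (p ^ 2), x = (p : ZMod (p ^ 2)) * y) ↔ p ∣ x.val := by
  have hne : NeZero (p ^ 2) := ⟨pow_ne_zero 2 hp.ne_zero⟩
  constructor
  · rintro ⟨y, rfl⟩
    have : ((p : ZMod (p ^ 2)) * y) = ((p * y.val : ℕ) : ZMod (p ^ 2)) := by
      push_cast
      rw [ZMod.natCast_zmod_val]
    rw [this, ZMod.val_natCast]
    exact (Nat.dvd_mod_iff (dvd_pow_self p two_ne_zero)).mpr ⟨y.val, rfl⟩
  · rintro ⟨c, hc⟩
    refine ⟨(c : ZMod (p ^ 2)), ?_⟩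
    have : x = ((x.val : ℕ) : ZMod (p ^ 2)) := (ZMod.natCast_zmod_val x).symm
    rw [this, hc]
    push_cast
    ring

theorem local_powerful_no_residue_high_multiplicity (p : ℕ) (hp : p.Prime)
    (a0 : ZMod (p ^ 2)) (A : Multiset (ZMod (p ^ 2)))
    (hA : ∀ a ∈ A, ¬∃ y : ZMod (p ^ 2), a = (p : ZMod (p ^ 2)) * y)
    (hdisj : ∀ s : Multiset (ZMod (p ^ 2)), s ≤ A → s ≠ 0 →
      ¬((∃ y : ZMod (p ^ 2), a0 + s.sum = (p : ZMod (p ^ 2)) * y) ∧ a0 + s.sum ≠ 0)) :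
    ∀ r : ℕ, (A.filter (fun a => (ZMod.val a) % p = r)).card ≤ 2 * p := by
  intro r
  by_contra hcard
  push_neg at hcard
  haveI : Fact p.Prime := ⟨hp⟩
  haveI : NeZero (p ^ 2) := ⟨pow_ne_zero 2 hp.ne_zero⟩
  set B := A.filter (fun a => (ZMod.val a) % p = r) with hB
  have hBA : B ≤ A := Multiset.filter_le _ _
  have hmemB : ∀ a ∈ B, (ZMod.val a) % p = r := by
    intro a ha
    exact (Multiset.mem_filter.mp ha).2
  -- the reduction map mod p
  set φ : ZMod (p ^ 2) →+* ZMod p :=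
    ZMod.castHom (dvd_pow_self p two_ne_zero) (ZMod p) with hφ
  have hφval : ∀ x : ZMod (p ^ 2), φ x = ((x.val : ℕ) : ZMod p) := by
    intro x
    rw [hφ, ZMod.castHom_apply, ZMod.natCast_val]
  -- all elements of B map to (r : ZMod p), which is nonzero
  have hφB : ∀ a ∈ B, φ a = (r : ZMod p) := by
    intro a ha
    rw [hφval, ← hmemB a ha]
    exact (ZMod.natCast_mod _ p).symm
  have hBne : B ≠ 0 := by
    intro h
    rw [h] at hcard
    simp at hcard
  obtain ⟨a₁, ha₁⟩ := Multiset.exists_mem_of_ne_zero hBne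
  have hrne : (r : ZMod p) ≠ 0 := by
    intro h
    have := hA a₁ (Multiset.mem_of_le hBA ha₁)
    apply this
    rw [mult_of_p_iff p hp]
    rw [← hφB a₁ ha₁, hφval] at h
    exact (ZMod.natCast_eq_zero_iff _ _).mp h
  -- choose k with 1 ≤ k ≤ p and (k : ZMod p) * r = -φ a0
  set u : ZMod p := -φ a0 * (r : ZMod p)⁻¹ with hu
  set k : ℕ := if u.val = 0 then p else u.val with hk
  have hk1 : 1 ≤ k := by
    rw [hk]; split
    · exact hp.one_lt.le
    · omega
  have hkp : k ≤ p := by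
    rw [hk]; split
    · exact le_refl p
    · exact (ZMod.val_lt u).le
  have hkcast : (k : ZMod p) = u := by
    rw [hk]; split
    · next h =>
      rw [ZMod.natCast_self]
      rw [← ZMod.natCast_zmod_val u, h, Nat.cast_zero]
    · exact ZMod.natCast_zmod_val u
  have hku : (k : ZMod p) * (r : ZMod p) = -φ a0 := by
    rw [hkcast, hu, mul_assoc, inv_mul_cancel₀ hrne, mul_one]
  -- key: every submultiset of B with card k or k + p sums to -a0
  have key : ∀ s : Multiset (ZMod (p ^ 2)), s ≤ B →
      (Multiset.card s = k ∨ Multiset.card s = k + p) → s.sum = -a0 := by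
    intro s hs hcards
    have hsA : s ≤ A := le_trans hs hBA
    have hsne : s ≠ 0 := by
      intro h
      rw [h] at hcards
      simp at hcards
      omega
    have hφsum : φ s.sum = (Multiset.card s : ℕ) * (r : ZMod p) := by
      have h1 : (s.map φ).sum = φ s.sum := (map_multiset_sum φ s).symm
      have h2 : s.map φ = Multiset.replicate (Multiset.card s) ((r : ZMod p)) := by
        apply Multiset.eq_replicate.mpr
        constructor
        · simp
        · intro b hb
          obtain ⟨a, ha, rfl⟩ := Multiset.mem_map.mp hb
          exact hφB a (Multiset.mem_of_le hs ha)
      rw [← h1, h2, Multiset.sum_replicate, nsmul_eq_mul]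
    have hzero : φ (a0 + s.sum) = 0 := by
      rw [map_add, hφsum]
      rcases hcards with h | h
      · rw [h, hku]; ring
      · rw [h, Nat.cast_add, ZMod.natCast_self, add_zero, hku]; ring
    have hdvd : ∃ y : ZMod (p ^ 2), a0 + s.sum = (p : ZMod (p ^ 2)) * y := by
      rw [mult_of_p_iff p hp]
      rw [hφval] at hzero
      exact (ZMod.natCast_eq_zero_iff _ _).mp hzero
    have := hdisj s hsA hsne
    by_contra hne
    exact this ⟨hdvd, fun h0 => hne (eq_neg_of_add_eq_zero_right h0)⟩
  -- Step: all elements of B are equal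
  have hallEq : ∀ x ∈ B, ∀ y ∈ B, x = y := by
    intro x hx y hy
    -- take t ≤ (B.erase x).erase y with card k - 1
    have hcardB : 2 * p < Multiset.card B := hcard
    have hcardC : k - 1 ≤ Multiset.card ((B.erase x).erase y) := by
      have h1 := Multiset.card_erase_add_one hx
      by_cases hmem : y ∈ B.erase x
      · have h2 := Multiset.card_erase_add_one hmem
        omega
      · rw [Multiset.erase_of_notMem hmem]
        omega
    obtain ⟨t, ht, htcard⟩ := multiset_exists_le_card _ (k - 1) hcardC
    have htx : x ::ₘ t ≤ B := by
      have h1 : t ≤ B.erase x := le_trans ht (Multiset.erase_le y _)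
      calc x ::ₘ t ≤ x ::ₘ B.erase x := Multiset.cons_le_cons x h1
        _ = B := Multiset.cons_erase hx
    have hty : y ::ₘ t ≤ B := by
      have h1 : t ≤ B.erase y := by
        rw [Multiset.erase_comm] at ht
        exact le_trans ht (Multiset.erase_le x _)
      calc y ::ₘ t ≤ y ::ₘ B.erase y := Multiset.cons_le_cons y h1
        _ = B := Multiset.cons_erase hy
    have hcx : Multiset.card (x ::ₘ t) = k := by simp [htcard]; omega
    have hcy : Multiset.card (y ::ₘ t) = k := by simp [htcard]; omega
    have hsx := key (x ::ₘ t) htx (Or.inl hcx)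
    have hsy := key (y ::ₘ t) hty (Or.inl hcy)
    rw [Multiset.sum_cons] at hsx hsy
    have : x + t.sum = y + t.sum := by rw [hsx, hsy]
    exact add_right_cancel this
  -- now take subsets of size k and k + p
  have hk' : k ≤ Multiset.card B := by omega
  have hkp' : k + p ≤ Multiset.card B := by omega
  obtain ⟨s₁, hs₁, hc₁⟩ := multiset_exists_le_card B k hk'
  obtain ⟨s₂, hs₂, hc₂⟩ := multiset_exists_le_card B (k + p) hkp'
  have hsum₁ := key s₁ hs₁ (Or.inl hc₁)
  have hsum₂ := key s₂ hs₂ (Or.inr hc₂)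
  -- all elements equal a₁
  have hrep : ∀ s : Multiset (ZMod (p ^ 2)), s ≤ B →
      s.sum = (Multiset.card s) • a₁ := by
    intro s hs
    have : s = Multiset.replicate (Multiset.card s) a₁ :=
      Multiset.eq_replicate_card.mpr fun b hb =>
        hallEq b (Multiset.mem_of_le hs hb) a₁ ha₁
    rw [this, Multiset.sum_replicate, Multiset.card_replicate]
  rw [hrep s₁ hs₁, hc₁] at hsum₁
  rw [hrep s₂ hs₂, hc₂] at hsum₂
  have hps : (p : ℕ) • a₁ = 0 := by
    have : (k + p) • a₁ = k • a₁ := by rw [hsum₁, hsum₂]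
    rw [add_nsmul] at this
    exact add_eq_left.mp this
  have : (p : ZMod (p ^ 2)) * a₁ = 0 := by
    rw [← nsmul_eq_mul]; exact hps
  have hdvd : p ∣ a₁.val := by
    have h1 : ((p * a₁.val : ℕ) : ZMod (p ^ 2)) = 0 := by
      push_cast
      rw [ZMod.natCast_zmod_val]
      exact this
    have h2 : p ^ 2 ∣ p * a₁.val := (ZMod.natCast_eq_zero_iff _ _).mp h1
    obtain ⟨c, hc⟩ := h2
    refine ⟨c, Nat.eq_of_mul_eq_mul_left hp.pos ?_⟩
    rw [hc]; ring
  exact hA a₁ (Multiset.mem_of_le hBA ha₁) ((mult_of_p_iff p hp a₁).mpr hdvd)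
end

section
/- There exists an absolute constant K' > 0 such that for every prime p, every a_0 ∈ ℤ/p²ℤ, and every finite multiset A of elements of ℤ/p²ℤ \ {0, p, 2p, …, (p-1)p} with a_0 + Σ*(A) disjoint from {p, 2p, …, (p-1)p}, one has |A| ≤ K'·p. -/
open scoped Pointwise

/-! Let `f : ℤ/p²ℤ → ℤ/pℤ` be reduction. By Cauchy–Davenport, the sub-sums of any `p - 1` elements
with nonzero residues hit every residue. One block of `p` elements of `A` contains a sub-sum
absorbing `a0`, after which the hypothesis says that every sub-sum of the rest of `A` with residue
`0` is exactly `0`. With three further disjoint blocks of size `p - 1`, the sum of a sub-multiset of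
the first block with residue `t` is then determined by `t` and additive in `t`: it is an additive
lift `ℤ/pℤ → ℤ/p²ℤ` of the identity. Its value at `1` is a unit killed by `p`, which is absurd;
hence `|A| ≤ 4p`. -/

lemma Multiset.exists_eq_add_card_eq {α : Type*} {n : ℕ} {s : Multiset α} (h : n ≤ s.card) :
    ∃ t u, s = t + u ∧ t.card = n := by
  obtain ⟨t, ht⟩ := Multiset.exists_mem_of_ne_zero (s := Multiset.powersetCard n s) <| by
    rw [← Multiset.card_pos, Multiset.card_powersetCard]; exact Nat.choose_pos h
  obtain ⟨hts, htn⟩ := Multiset.mem_powersetCard.1 ht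
  obtain ⟨u, rfl⟩ := Multiset.le_iff_exists_add.1 hts
  exact ⟨t, u, rfl, htn⟩

section SubsumResidues

variable {M : Type*} [AddCommMonoid M] {p : ℕ} (f : M →+ ZMod p)

def subsumResidues (s : Multiset M) : Finset (ZMod p) :=
  (s.powerset.map fun u => f u.sum).toFinset

lemma subsumResidues_cons (a : M) (s : Multiset M) :
    subsumResidues f (a ::ₘ s) = subsumResidues f s + ({0, f a} : Finset (ZMod p)) := by
  ext x
  simp [subsumResidues, Multiset.powerset_cons, Finset.mem_add, add_comm]

variable [Fact p.Prime]

lemma min_le_card_subsumResidues {s : Multiset M} (hs : ∀ x ∈ s, f x ≠ 0) :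
    min p (s.card + 1) ≤ (subsumResidues f s).card := by
  induction s using Multiset.induction_on with
  | empty => simp [subsumResidues]
  | cons a s ih =>
    have hne : (subsumResidues f s).Nonempty :=
      ⟨0, by simpa [subsumResidues] using ⟨0, Multiset.zero_le _, by simp⟩⟩
    have hpair : ({0, f a} : Finset (ZMod p)).card = 2 :=
      Finset.card_pair (hs a (Multiset.mem_cons_self a s)).symm
    have hCD := ZMod.cauchy_davenport Fact.out hne (Finset.insert_nonempty 0 {f a})
    have := ih fun x hx => hs x (Multiset.mem_cons_of_mem hx)
    rw [hpair] at hCD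
    rw [subsumResidues_cons, Multiset.card_cons]
    omega

lemma exists_le_sum_eq {s : Multiset M} (hs : ∀ x ∈ s, f x ≠ 0) (hcard : p - 1 ≤ s.card)
    (t : ZMod p) : ∃ u ≤ s, f u.sum = t := by
  have huniv : subsumResidues f s = Finset.univ := by
    refine Finset.eq_univ_of_card _ (le_antisymm (Finset.card_le_univ _) ?_)
    have := min_le_card_subsumResidues f hs
    have := (Fact.out : p.Prime).pos
    rw [ZMod.card]
    omega
  have ht : t ∈ subsumResidues f s := huniv ▸ Finset.mem_univ t
  simpa [subsumResidues] using ht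

lemma exists_ne_zero_le_sum_eq {s : Multiset M} (hs : ∀ x ∈ s, f x ≠ 0) (hcard : p ≤ s.card)
    (t : ZMod p) : ∃ u ≤ s, u ≠ 0 ∧ f u.sum = t := by
  obtain ⟨a, ha⟩ := Multiset.card_pos_iff_exists_mem.1 ((Fact.out : p.Prime).pos.trans_le hcard)
  obtain ⟨s, rfl⟩ := Multiset.exists_cons_of_mem ha
  obtain ⟨u, hu, hut⟩ := exists_le_sum_eq f (fun x hx => hs x (Multiset.mem_cons_of_mem hx))
    (by simp only [Multiset.card_cons] at hcard; omega) (t - f a)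
  exact ⟨a ::ₘ u, Multiset.cons_le_cons a hu, Multiset.cons_ne_zero, by simp [hut]⟩

end SubsumResidues

section LiftOfResidue

variable {M : Type*} [AddCommGroup M]

lemma sum_eq_zero_of_map_sum_eq_zero {p : ℕ} [Fact p.Prime] (f : M →+ ZMod p) {a₀ : M}
    {A B : Multiset M} (hA : ∀ x ∈ A, f x ≠ 0) (hcard : p ≤ A.card)
    (h : ∀ s ≤ A + B, s ≠ 0 → f (a₀ + s.sum) = 0 → a₀ + s.sum = 0) :
    ∀ u ≤ B, f u.sum = 0 → u.sum = 0 := by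
  obtain ⟨s, hs, hs0, hsf⟩ := exists_ne_zero_le_sum_eq f hA hcard (-f a₀)
  have ha₀ : a₀ + s.sum = 0 :=
    h s (hs.trans (Multiset.le_add_right A B)) hs0 (by rw [map_add, hsf, add_neg_cancel])
  intro u hu hfu
  have hsu := h (s + u) (add_le_add hs hu) (by simp [hs0])
    (by rw [Multiset.sum_add, map_add, map_add, hsf, hfu, add_zero, add_neg_cancel])
  rwa [Multiset.sum_add, ← add_assoc, ha₀, zero_add] at hsu

lemma exists_nsmul_eq_zero_of_forall_exists_sum_eq {n : ℕ} (f : M →+ ZMod n)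
    {B₁ B₂ B₃ : Multiset M} (h₁ : ∀ t, ∃ u ≤ B₁, f u.sum = t) (h₂ : ∀ t, ∃ u ≤ B₂, f u.sum = t)
    (h₃ : ∀ t, ∃ u ≤ B₃, f u.sum = t) (hB : ∀ u ≤ B₁ + B₂ + B₃, f u.sum = 0 → u.sum = 0) :
    ∃ c, f c = 1 ∧ n • c = 0 := by
  choose v₁ hv₁ hfv₁ using h₁
  choose v₂ hv₂ hfv₂ using h₂
  choose v₃ hv₃ hfv₃ using h₃
  have hv₁₂ : ∀ a b, v₁ a + v₂ b ≤ B₁ + B₂ + B₃ := fun a b =>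
    (add_le_add (hv₁ a) (hv₂ b)).trans (Multiset.le_add_right _ _)
  have hv₁₃ : ∀ a b, v₁ a + v₃ b ≤ B₁ + B₂ + B₃ := fun a b =>
    add_le_add ((hv₁ a).trans (Multiset.le_add_right _ _)) (hv₃ b)
  have hneg₂ : ∀ a, (v₂ (-a)).sum = -(v₁ a).sum := fun a => by
    have := hB _ (hv₁₂ a (-a)) (by rw [Multiset.sum_add, map_add, hfv₁, hfv₂, add_neg_cancel])
    rw [Multiset.sum_add] at this
    exact eq_neg_of_add_eq_zero_right this
  have hneg₃ : ∀ a, (v₃ (-a)).sum = -(v₁ a).sum := fun a => by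
    have := hB _ (hv₁₃ a (-a)) (by rw [Multiset.sum_add, map_add, hfv₁, hfv₃, add_neg_cancel])
    rw [Multiset.sum_add] at this
    exact eq_neg_of_add_eq_zero_right this
  have hadd : ∀ a b, (v₁ (a + b)).sum = (v₁ a).sum + (v₁ b).sum := fun a b => by
    have := hB (v₁ (a + b) + v₂ (-a) + v₃ (-b))
      (add_le_add (add_le_add (hv₁ _) (hv₂ _)) (hv₃ _))
      (by rw [Multiset.sum_add, Multiset.sum_add, map_add, map_add, hfv₁, hfv₂, hfv₃]; ring)
    rwa [Multiset.sum_add, Multiset.sum_add, hneg₂, hneg₃, add_assoc, ← neg_add,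
      add_neg_eq_zero] at this
  let φ : ZMod n →+ M := AddMonoidHom.mk' (fun t => (v₁ t).sum) hadd
  refine ⟨φ 1, hfv₁ 1, ?_⟩
  rw [← map_nsmul, nsmul_one, ZMod.natCast_self, map_zero]

end LiftOfResidue

section SquareModulus

variable {p : ℕ} [NeZero p]

lemma ZMod.castHom_eq_zero_iff_exists_eq_mul (x : ZMod (p ^ 2)) :
    ZMod.castHom (dvd_pow_self p two_ne_zero) (ZMod p) x = 0 ↔
      ∃ y : ZMod (p ^ 2), x = (p : ZMod (p ^ 2)) * y := by
  constructor
  · rw [ZMod.castHom_apply, ZMod.cast_eq_val, ZMod.natCast_eq_zero_iff]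
    rintro ⟨k, hk⟩
    exact ⟨k, by rw [← ZMod.natCast_zmod_val x, hk, Nat.cast_mul]⟩
  · rintro ⟨y, rfl⟩
    rw [map_mul, map_natCast, ZMod.natCast_self, zero_mul]

lemma ZMod.castHom_eq_zero_of_nsmul_eq_zero {x : ZMod (p ^ 2)} (hx : p • x = 0) :
    ZMod.castHom (dvd_pow_self p two_ne_zero) (ZMod p) x = 0 := by
  rw [ZMod.castHom_apply, ZMod.cast_eq_val, ZMod.natCast_eq_zero_iff]
  rw [nsmul_eq_mul, ← ZMod.natCast_zmod_val x, ← Nat.cast_mul, ZMod.natCast_eq_zero_iff] at hx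
  exact Nat.dvd_of_mul_dvd_mul_left (NeZero.pos p) (by rwa [← sq])

end SquareModulus

theorem local_powerful_size_bound : ∃ K' : ℝ, 0 < K' ∧ ∀ (p : ℕ), p.Prime →
    ∀ (a0 : ZMod (p ^ 2)) (A : Multiset (ZMod (p ^ 2))),
    (∀ a ∈ A, ¬∃ y : ZMod (p ^ 2), a = (p : ZMod (p ^ 2)) * y) →
    (∀ s : Multiset (ZMod (p ^ 2)), s ≤ A → s ≠ 0 →
      ¬((∃ y : ZMod (p ^ 2), a0 + s.sum = (p : ZMod (p ^ 2)) * y) ∧ a0 + s.sum ≠ 0)) →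
    (Multiset.card A : ℝ) ≤ K' * p := by
  refine ⟨4, four_pos, fun p hp a0 A hA hsums => ?_⟩
  have := Fact.mk hp
  set f := (ZMod.castHom (dvd_pow_self p two_ne_zero) (ZMod p)).toAddMonoidHom
  have hfA : ∀ a ∈ A, f a ≠ 0 := fun a ha h =>
    hA a ha ((ZMod.castHom_eq_zero_iff_exists_eq_mul a).1 h)
  have hfsums : ∀ s ≤ A, s ≠ 0 → f (a0 + s.sum) = 0 → a0 + s.sum = 0 := fun s hs hs0 h =>
    not_not.1 fun hne => hsums s hs hs0 ⟨(ZMod.castHom_eq_zero_iff_exists_eq_mul _).1 h, hne⟩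
  by_contra! hbig
  have hcard : p + 3 * (p - 1) ≤ A.card := by
    have : 4 * p < A.card := by exact_mod_cast hbig
    omega
  obtain ⟨A₀, A₁, rfl, hA₀⟩ := Multiset.exists_eq_add_card_eq (s := A) (n := p) (by omega)
  obtain ⟨B₁, A₂, rfl, hB₁⟩ := Multiset.exists_eq_add_card_eq (s := A₁) (n := p - 1)
    (by simp only [Multiset.card_add] at hcard; omega)
  obtain ⟨B₂, A₃, rfl, hB₂⟩ := Multiset.exists_eq_add_card_eq (s := A₂) (n := p - 1)
    (by simp only [Multiset.card_add] at hcard; omega)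
  obtain ⟨B₃, R, rfl, hB₃⟩ := Multiset.exists_eq_add_card_eq (s := A₃) (n := p - 1)
    (by simp only [Multiset.card_add] at hcard; omega)
  have hB := sum_eq_zero_of_map_sum_eq_zero f (fun x hx => hfA x (by simp [hx])) hA₀.ge hfsums
  obtain ⟨c, hc1, hc0⟩ := exists_nsmul_eq_zero_of_forall_exists_sum_eq f
    (exists_le_sum_eq f (fun x hx => hfA x (by simp [hx])) hB₁.ge)
    (exists_le_sum_eq f (fun x hx => hfA x (by simp [hx])) hB₂.ge)
    (exists_le_sum_eq f (fun x hx => hfA x (by simp [hx])) hB₃.ge)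
    (fun u hu => hB u (hu.trans (by simp [add_assoc])))
  exact one_ne_zero (hc1 ▸ ZMod.castHom_eq_zero_of_nsmul_eq_zero hc0)
end

section
/- If A ⊆ {1,…,N} is a multiset and there exists a nonnegative integer a_0 such that every element of a_0 + Σ*(A) is squarefree, then |A| ≤ 72 (log N)², provided Σ_{p ≤ 6 log N} log p > 2 log N (which holds for all sufficiently large N). -/
/-!
Fix a prime `p`. The elements of `A` prime to `p` are units modulo `p²`, and each further unit
enlarges the set of subset sums modulo `p²` until it is everything; so if `p²` of them existed,
some nonempty subset sum would be `≡ -a0`, and `a0 +` that sum would be divisible by `p²`.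
Hence fewer than `p² ≤ 36 (log N)²` elements of `A` are prime to each `p ≤ 6 log N`.
On the other hand `∑_{p ∣ a} log p ≤ log a ≤ log N`, so double counting gives
`∑_p log p · #{a ∈ A : p ∣ a} ≤ |A| log N`. Adding the two bounds with weights `log p` yields
`|A| (∑_p log p - log N) ≤ 36 (log N)² ∑_p log p`, and `∑_p log p > 2 log N` finishes.
-/

open Finset

/-- Unlike `Σ*(A)`, this contains the empty sum `0`. -/
def subsetSumsMod (m : ℕ) (t : Multiset ℕ) : Finset (ZMod m) :=
  (t.powerset.map fun u => ((u.sum : ℕ) : ZMod m)).toFinset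

lemma mem_subsetSumsMod {m : ℕ} {t : Multiset ℕ} {x : ZMod m} :
    x ∈ subsetSumsMod m t ↔ ∃ u ≤ t, (u.sum : ZMod m) = x := by
  simp [subsetSumsMod]

lemma subsetSumsMod_cons (m a : ℕ) (t : Multiset ℕ) :
    subsetSumsMod m (a ::ₘ t) =
      subsetSumsMod m t ∪ (subsetSumsMod m t).image ((a : ZMod m) + ·) := by
  simp only [subsetSumsMod, Multiset.powerset_cons, Multiset.map_add, Multiset.toFinset_add,
    Multiset.map_map, ← Multiset.toFinset_map]
  congr 2
  ext u
  simp

lemma ZMod.eq_univ_of_zero_mem_of_add_mem {m : ℕ} [NeZero m] {S : Finset (ZMod m)} {a : ZMod m}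
    (ha : IsUnit a) (h0 : 0 ∈ S) (hS : ∀ x ∈ S, a + x ∈ S) : S = univ := by
  have hmul : ∀ n : ℕ, n • a ∈ S := by
    intro n
    induction n with
    | zero => simpa using h0
    | succ n ih => rw [succ_nsmul']; exact hS _ ih
  refine eq_univ_of_forall fun x => ?_
  have hx : (x * ha.unit⁻¹).val • a = x := by
    rw [nsmul_eq_mul, ZMod.natCast_zmod_val, mul_assoc, ha.val_inv_mul, mul_one]
  exact hx ▸ hmul _

lemma min_le_card_subsetSumsMod (m : ℕ) [NeZero m] (t : Multiset ℕ)
    (ht : ∀ x ∈ t, IsUnit (x : ZMod m)) :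
    min m (Multiset.card t + 1) ≤ #(subsetSumsMod m t) := by
  induction t using Multiset.induction with
  | empty => simp [subsetSumsMod]
  | cons a t ih =>
    have ih := ih fun x hx => ht x (Multiset.mem_cons_of_mem hx)
    rw [subsetSumsMod_cons, Multiset.card_cons]
    set S := subsetSumsMod m t
    by_cases hclosed : ∀ x ∈ S, (a : ZMod m) + x ∈ S
    · have hS : S = univ := ZMod.eq_univ_of_zero_mem_of_add_mem (ht a (Multiset.mem_cons_self a t))
        (mem_subsetSumsMod.2 ⟨0, Multiset.zero_le t, by simp⟩) hclosed
      calc min m (Multiset.card t + 1 + 1) ≤ #S := by simp [hS]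
        _ ≤ _ := card_le_card subset_union_left
    · push Not at hclosed
      obtain ⟨x, hxS, hax⟩ := hclosed
      calc min m (Multiset.card t + 1 + 1) ≤ #S + 1 := by omega
        _ = #(insert ((a : ZMod m) + x) S) := (card_insert_of_notMem hax).symm
        _ ≤ _ := card_le_card (insert_subset (mem_union_right _ (mem_image_of_mem _ hxS))
            subset_union_left)

lemma card_filter_isUnit_lt_of_sum_ne {m : ℕ} [NeZero m] {A : Multiset ℕ} (c : ZMod m)
    (hA : ∀ s ≤ A, s ≠ 0 → (s.sum : ZMod m) ≠ c) :
    Multiset.card (A.filter fun a : ℕ => IsUnit (a : ZMod m)) < m := by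
  set t := A.filter fun a : ℕ => IsUnit (a : ZMod m)
  by_contra! ht
  -- `t.erase a` still has `m - 1` units, so its subset sums reach `c - a`.
  obtain ⟨a, ha⟩ : ∃ a, a ∈ t := Multiset.exists_mem_of_ne_zero <| by
    rintro h; simp [h, NeZero.ne m] at ht
  have hcover : subsetSumsMod m (t.erase a) = univ := by
    refine eq_univ_of_card _ (le_antisymm (card_le_univ _) ?_)
    have := min_le_card_subsetSumsMod m (t.erase a) fun x hx =>
      (Multiset.mem_filter.1 (Multiset.mem_of_mem_erase hx)).2
    rw [Multiset.card_erase_of_mem ha, Nat.pred_eq_sub_one, ZMod.card] at *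
    omega
  obtain ⟨u, hu, hsum⟩ := mem_subsetSumsMod.1 (hcover ▸ mem_univ (c - a))
  refine hA (a ::ₘ u) ?_ Multiset.cons_ne_zero ?_
  · exact ((Multiset.cons_le_cons a hu).trans (Multiset.cons_erase ha).le).trans
      (Multiset.filter_le _ _)
  · simp [hsum]

lemma card_filter_not_dvd_lt_prime_pow {p k : ℕ} (hp : p.Prime) (hk : 0 < k) {A : Multiset ℕ}
    (c : ZMod (p ^ k)) (hA : ∀ s ≤ A, s ≠ 0 → (s.sum : ZMod (p ^ k)) ≠ c) :
    Multiset.card (A.filter fun a => ¬ p ∣ a) < p ^ k := by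
  have : NeZero (p ^ k) := ⟨pow_ne_zero k hp.ne_zero⟩
  simpa only [ZMod.isUnit_natCast_iff_not_dvd_pow hp hk] using
    card_filter_isUnit_lt_of_sum_ne c hA

lemma sum_log_filter_dvd_le_log {P : Finset ℕ} (hP : ∀ p ∈ P, p.Prime) {a : ℕ} (ha : a ≠ 0) :
    ∑ p ∈ P with p ∣ a, Real.log p ≤ Real.log a := by
  open ArithmeticFunction in
  calc ∑ p ∈ P with p ∣ a, Real.log p = ∑ p ∈ P with p ∣ a, Λ p :=
        sum_congr rfl fun p hp => (vonMangoldt_apply_prime (hP p (mem_filter.1 hp).1)).symm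
    _ ≤ ∑ d ∈ a.divisors, Λ d :=
        sum_le_sum_of_subset_of_nonneg (fun p hp => Nat.mem_divisors.2 ⟨(mem_filter.1 hp).2, ha⟩)
          fun _ _ _ => vonMangoldt_nonneg
    _ = Real.log a := vonMangoldt_sum

lemma sum_log_mul_card_filter_dvd_le {N : ℕ} {P : Finset ℕ} (hP : ∀ p ∈ P, p.Prime)
    {A : Multiset ℕ} (hA : ∀ a ∈ A, a ∈ Icc 1 N) :
    ∑ p ∈ P, Real.log p * Multiset.card (A.filter (p ∣ ·)) ≤ Multiset.card A * Real.log N := by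
  suffices hswap : ∑ p ∈ P, Real.log p * Multiset.card (A.filter (p ∣ ·)) =
      (A.map fun a => ∑ p ∈ P with p ∣ a, Real.log p).sum by
    rw [hswap, ← Multiset.card_map (fun a => ∑ p ∈ P with p ∣ a, Real.log p), ← nsmul_eq_mul]
    refine Multiset.sum_le_card_nsmul _ _ fun x hx => ?_
    obtain ⟨a, ha, rfl⟩ := Multiset.mem_map.1 hx
    obtain ⟨ha1, haN⟩ := mem_Icc.1 (hA a ha)
    exact (sum_log_filter_dvd_le_log hP (by omega)).trans
      (Real.log_le_log (by exact_mod_cast ha1) (by exact_mod_cast haN))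
  clear hA
  induction A using Multiset.induction with
  | empty => simp
  | cons a A ih =>
    simp [Multiset.filter_cons, apply_ite, mul_add, sum_add_distrib, sum_filter, ih]

lemma card_le_of_card_filter_not_dvd_le {N : ℕ} {P : Finset ℕ} (hP : ∀ p ∈ P, p.Prime)
    {A : Multiset ℕ} (hA : ∀ a ∈ A, a ∈ Icc 1 N) {K : ℝ}
    (hK : ∀ p ∈ P, (Multiset.card (A.filter (¬ p ∣ ·)) : ℝ) ≤ K) {ε : ℝ} (hε : 0 < ε)
    (hPN : (1 + ε) * Real.log N < ∑ p ∈ P, Real.log p) :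
    (Multiset.card A : ℝ) ≤ (1 + ε⁻¹) * K := by
  set T := ∑ p ∈ P, Real.log p
  set L := Real.log N
  set n : ℝ := (Multiset.card A : ℝ)
  have hL : 0 ≤ L := Real.log_natCast_nonneg N
  have hn : 0 ≤ n := Nat.cast_nonneg _
  have hcount : n * T ≤ n * L + K * T :=
    calc n * T = ∑ p ∈ P, Real.log p * Multiset.card (A.filter (p ∣ ·)) +
          ∑ p ∈ P, Real.log p * Multiset.card (A.filter (¬ p ∣ ·)) := by
          rw [← sum_add_distrib, mul_sum]
          refine sum_congr rfl fun p _ => ?_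
          rw [← mul_add, ← Nat.cast_add, ← Multiset.card_add, Multiset.filter_add_not, mul_comm]
      _ ≤ n * L + ∑ p ∈ P, Real.log p * K :=
          add_le_add (sum_log_mul_card_filter_dvd_le hP hA)
            (sum_le_sum fun p hp => mul_le_mul_of_nonneg_left (hK p hp) (Real.log_natCast_nonneg p))
      _ = n * L + K * T := by rw [← sum_mul]; ring
  have hTL : 0 < T - L := by nlinarith
  have hK0 : 0 ≤ K := by nlinarith
  have hgap : T ≤ (1 + ε⁻¹) * (T - L) := by
    have : 0 ≤ ε⁻¹ * (T - L - ε * L) := mul_nonneg (inv_nonneg.2 hε.le) (by linarith)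
    rw [mul_sub, ← mul_assoc, inv_mul_cancel₀ hε.ne', one_mul, sub_nonneg] at this
    linarith
  refine le_of_mul_le_mul_right ?_ hTL
  calc n * (T - L) ≤ K * T := by linarith
    _ ≤ K * ((1 + ε⁻¹) * (T - L)) := mul_le_mul_of_nonneg_left hgap hK0
    _ = (1 + ε⁻¹) * K * (T - L) := by ring

open scoped Classical in
theorem hilbert_cube_in_squarefree_general (N : ℕ) (A : Multiset ℕ)
    (hA : ∀ a ∈ A, a ∈ Finset.Icc 1 N) (a0 : ℕ)
    (hsf : ∀ s : Multiset ℕ, s ≤ A → s ≠ 0 → Squarefree (a0 + s.sum))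
    (hprimes : 2 * Real.log N <
      ∑ p ∈ (Finset.range (6 * N + 1)).filter
        (fun p : ℕ => Nat.Prime p ∧ (p : ℝ) ≤ 6 * Real.log N), Real.log p) :
    (Multiset.card A : ℝ) ≤ 72 * (Real.log N) ^ 2 := by
  set P := (Finset.range (6 * N + 1)).filter
    (fun p : ℕ => Nat.Prime p ∧ (p : ℝ) ≤ 6 * Real.log N)
  have hP : ∀ p ∈ P, p.Prime := fun p hp => (mem_filter.1 hp).2.1
  have hK : ∀ p ∈ P, (Multiset.card (A.filter (¬ p ∣ ·)) : ℝ) ≤ 36 * Real.log N ^ 2 := by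
    intro p hp
    have hsum : ∀ s ≤ A, s ≠ 0 → (s.sum : ZMod (p ^ 2)) ≠ -a0 := by
      intro s hs hs0 h
      have hdvd : p * p ∣ a0 + s.sum := by
        rw [← sq, ← ZMod.natCast_eq_zero_iff, Nat.cast_add, h, add_neg_cancel]
      exact Nat.squarefree_iff_prime_squarefree.1 (hsf s hs hs0) p (hP p hp) hdvd
    have hlt : (Multiset.card (A.filter (¬ p ∣ ·)) : ℝ) < (p : ℝ) ^ 2 := by
      exact_mod_cast card_filter_not_dvd_lt_prime_pow (hP p hp) two_pos _ hsum
    calc _ ≤ (p : ℝ) ^ 2 := hlt.le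
      _ ≤ (6 * Real.log N) ^ 2 := pow_le_pow_left₀ (Nat.cast_nonneg p) (mem_filter.1 hp).2.2 2
      _ = 36 * Real.log N ^ 2 := by ring
  have := card_le_of_card_filter_not_dvd_le hP hA hK one_pos (by linarith)
  linarith

open scoped Classical in
theorem hilbert_cube_in_squarefree (N : ℕ) (hN : 2 ≤ N) (A : Multiset ℕ)
    (hA : ∀ a ∈ A, a ∈ Finset.Icc 1 N) (a0 : ℕ)
    (hsf : ∀ s : Multiset ℕ, s ≤ A → s ≠ 0 → Squarefree (a0 + s.sum))
    (hprimes : 2 * Real.log N <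
      ∑ p ∈ (Finset.range (6 * N + 1)).filter
        (fun p : ℕ => Nat.Prime p ∧ (p : ℝ) ≤ 6 * Real.log N), Real.log p) :
    (Multiset.card A : ℝ) ≤ 72 * (Real.log N) ^ 2 :=
  hilbert_cube_in_squarefree_general N A hA a0 hsf hprimes
end

section
/- Let ε > 0, let A ⊆ {1,…,N} be a finite multiset of positive integers, and let B be a set of pairwise coprime prime powers such that for each b ∈ B, the sums in Σ*(A) do not run over all residue classes modulo b. If Σ_{b∈B} Λ(b) > (1+ε)·log N, then |A| ≤ (1 + ε⁻¹)·max_{b∈B} b. -/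
/-!
For each `b ∈ B`, the elements of `A` coprime to `b` are units mod `b`, so by Vu's lemma there
are fewer than `b` of them: at least `|A| - max B` elements of `A` share a prime with `b`.
Weighting by `Λ b` and counting the other way round, a fixed `a ≤ N` shares a prime with
elements of `B` whose weights add up to at most `log a ≤ log N`, because these primes are
distinct and divide `a`. Hence `(|A| - max B) ∑ Λ(b) ≤ |A| log N < |A| ∑ Λ(b) / (1 + ε)`.
-/

open Nat Set ArithmeticFunction Function

namespace Multiset

variable {M N : Type*} [AddCommMonoid M] [AddCommMonoid N]

def subsetSums (A : Multiset M) : Set M := {x | ∃ s ≤ A, s ≠ 0 ∧ s.sum = x}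

theorem subsetSums_cons (a : M) (A : Multiset M) :
    subsetSums (a ::ₘ A) = insert a (subsetSums A ∪ (· + a) '' subsetSums A) := by
  ext x
  simp only [subsetSums, ← mem_powerset, powerset_cons, mem_add, mem_map]
  constructor
  · rintro ⟨s, hs | ⟨t, ht, rfl⟩, hs0, rfl⟩
    · exact .inr (.inl ⟨s, hs, hs0, rfl⟩)
    · rcases eq_or_ne t 0 with rfl | ht0
      · exact .inl (by simp)
      · exact .inr (.inr ⟨t.sum, ⟨t, ht, ht0, rfl⟩, by simp [add_comm]⟩)
  · rintro (rfl | ⟨s, hs, hs0, rfl⟩ | ⟨_, ⟨s, hs, hs0, rfl⟩, rfl⟩)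
    · exact ⟨{x}, .inr ⟨0, zero_mem_powerset A, rfl⟩, by simp, by simp⟩
    · exact ⟨s, .inl hs, hs0, rfl⟩
    · exact ⟨a ::ₘ s, .inr ⟨s, hs, rfl⟩, cons_ne_zero, by simp [add_comm]⟩

theorem subsetSums_map (f : M →+ N) (A : Multiset M) :
    subsetSums (A.map f) = f '' subsetSums A := by
  induction A using Multiset.induction_on with
  | empty => simp [subsetSums]
  | cons a A ih =>
    simp [subsetSums_cons, ih, Set.image_insert_eq, Set.image_union, Set.image_image]

theorem subsetSums_mono {A A' : Multiset M} (h : A ≤ A') : subsetSums A ⊆ subsetSums A' :=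
  fun _ ⟨s, hs, hs0, hsum⟩ => ⟨s, hs.trans h, hs0, hsum⟩

end Multiset

theorem Set.eq_univ_of_nonempty_of_add_mem {G : Type*} [AddGroup G] {a : G}
    (ha : AddSubmonoid.multiples a = ⊤) {S : Set G} (hS : S.Nonempty) (h : ∀ x ∈ S, x + a ∈ S) :
    S = univ := by
  obtain ⟨x, hx⟩ := hS
  have hmul : ∀ k : ℕ, x + k • a ∈ S := by
    intro k
    induction k with
    | zero => simpa using hx
    | succ k ih => simpa [succ_nsmul, ← add_assoc] using h _ ih
  refine eq_univ_of_forall fun y => ?_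
  obtain ⟨k, hk⟩ := (AddSubmonoid.mem_multiples_iff _ _).1 (ha ▸ AddSubmonoid.mem_top (-x + y))
  simpa [hk] using hmul k

namespace Multiset

variable {G : Type*} [AddCommGroup G] [Finite G]

/-- Olson's argument: adding `a` to `A` either enlarges the set of subset sums, or leaves it
invariant under translation by the generator `a`. -/
theorem card_le_ncard_subsetSums_or_eq_univ {A : Multiset G}
    (hA : ∀ a ∈ A, AddSubmonoid.multiples a = ⊤) :
    card A ≤ (subsetSums A).ncard ∨ subsetSums A = univ := by
  induction A using Multiset.induction_on with
  | empty => simp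
  | cons a A ih =>
    have hsub : subsetSums A ⊆ subsetSums (a ::ₘ A) := subsetSums_mono (le_cons_self A a)
    rcases ih fun b hb => hA b (mem_cons_of_mem hb) with hcard | huniv
    · rcases hsub.eq_or_ssubset with heq | hlt
      · have hS := subsetSums_cons a A
        rw [← heq] at hS ⊢
        exact .inr <| Set.eq_univ_of_nonempty_of_add_mem (hA a (mem_cons_self a A))
          ⟨a, hS ▸ mem_insert a _⟩ fun x hx => hS ▸ mem_insert_of_mem _ (.inr ⟨x, hx, rfl⟩)
      · left
        rw [card_cons]
        exact (Nat.succ_le_succ hcard).trans (ncard_lt_ncard hlt)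
    · exact .inr (univ_subset_iff.1 (huniv ▸ hsub))

theorem subsetSums_eq_univ_of_card_le {A : Multiset G}
    (hA : ∀ a ∈ A, AddSubmonoid.multiples a = ⊤) (hcard : Nat.card G ≤ card A) :
    subsetSums A = univ := by
  refine (card_le_ncard_subsetSums_or_eq_univ hA).elim (fun h => ?_) id
  exact eq_of_subset_of_ncard_le (subset_univ _) (by rw [ncard_univ]; omega)

end Multiset

theorem ZMod.multiples_eq_top_of_isUnit {n : ℕ} [NeZero n] {u : ZMod n} (hu : IsUnit u) :
    AddSubmonoid.multiples u = ⊤ :=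
  eq_top_iff.2 fun x _ => (AddSubmonoid.mem_multiples_iff _ _).2 ⟨(x * u⁻¹).val, by
    rw [nsmul_eq_mul, ZMod.natCast_zmod_val, mul_assoc, ZMod.inv_mul_of_unit u hu, mul_one]⟩

theorem Multiset.card_filter_coprime_lt {b : ℕ} (hb : b ≠ 0) {A : Multiset ℕ} {r : ℕ}
    (hr : ∀ s ≤ A, s ≠ 0 → s.sum % b ≠ r % b) : card (A.filter (Coprime · b)) < b := by
  have : NeZero b := ⟨hb⟩
  by_contra! hle
  set A' := A.filter (Coprime · b)
  have huniv : subsetSums (A'.map (Nat.castAddMonoidHom (ZMod b))) = univ := by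
    refine subsetSums_eq_univ_of_card_le (fun _ hx => ?_) (by simpa using hle)
    obtain ⟨a, ha, rfl⟩ := mem_map.1 hx
    exact ZMod.multiples_eq_top_of_isUnit ((ZMod.isUnit_iff_coprime a b).2 (mem_filter.1 ha).2)
  obtain ⟨_, ⟨s, hs, hs0, rfl⟩, hsr⟩ : (r : ZMod b) ∈ Nat.cast '' subsetSums A' := by
    rw [← coe_castAddMonoidHom, ← subsetSums_map, huniv]
    exact mem_univ _
  exact hr s (hs.trans (filter_le _ _)) hs0 ((ZMod.natCast_eq_natCast_iff' _ _ _).1 hsr)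

theorem Multiset.card_le_card_filter_not_coprime_add {b : ℕ} (hb : b ≠ 0) {A : Multiset ℕ}
    {r : ℕ} (hr : ∀ s ≤ A, s ≠ 0 → s.sum % b ≠ r % b) :
    card A ≤ card (A.filter (¬ Coprime · b)) + b := by
  have hsplit := congrArg card (A.filter_add_not (Coprime · b))
  rw [card_add] at hsplit
  have := card_filter_coprime_lt hb hr
  omega

theorem IsPrimePow.minFac_dvd_of_not_coprime {a b : ℕ} (hb : IsPrimePow b)
    (h : ¬ Coprime a b) : b.minFac ∣ a := by
  obtain ⟨p, k, hp, hk, rfl⟩ := (isPrimePow_nat_iff b).1 hb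
  rw [hp.pow_minFac hk.ne']
  by_contra hpa
  exact h (((Nat.Prime.coprime_iff_not_dvd hp).2 hpa).symm.pow_right k)

theorem Nat.prod_dvd_of_pairwise_coprime {ι : Type*} {s : Finset ι} {f : ι → ℕ} {n : ℕ}
    (hco : (s : Set ι).Pairwise (Coprime on f)) (hdvd : ∀ i ∈ s, f i ∣ n) :
    ∏ i ∈ s, f i ∣ n := by
  have := Finset.prod_dvd_of_coprime (t := s) (z := (n : ℤ)) (s := fun i => (f i : ℤ))
    (fun i hi j hj hij => Nat.isCoprime_iff_coprime.2 (hco hi hj hij))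
    fun i hi => Int.natCast_dvd_natCast.2 (hdvd i hi)
  exact_mod_cast this

theorem sum_filter_not_coprime_vonMangoldt_le_log {a : ℕ} (ha : a ≠ 0) {B : Finset ℕ}
    (hBpp : ∀ b ∈ B, IsPrimePow b) (hcop : (B : Set ℕ).Pairwise Coprime) :
    ∑ b ∈ B with ¬ Coprime a b, Λ b ≤ Real.log a := by
  have hdvd : ∏ b ∈ B with ¬ Coprime a b, b.minFac ∣ a := by
    refine Nat.prod_dvd_of_pairwise_coprime (fun b hb c hc hbc => ?_) fun b hb => ?_
    · simp only [Finset.coe_filter] at hb hc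
      exact ((hcop hb.1 hc.1 hbc).coprime_dvd_left (minFac_dvd b)).coprime_dvd_right (minFac_dvd c)
    · exact (hBpp b (Finset.mem_filter.1 hb).1).minFac_dvd_of_not_coprime (Finset.mem_filter.1 hb).2
  calc ∑ b ∈ B with ¬ Coprime a b, Λ b = ∑ b ∈ B with ¬ Coprime a b, Real.log b.minFac :=
        Finset.sum_congr rfl fun b hb => by
          rw [vonMangoldt_apply, if_pos (hBpp b (Finset.mem_filter.1 hb).1)]
    _ = Real.log (∏ b ∈ B with ¬ Coprime a b, b.minFac : ℕ) := by
        push_cast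
        exact (Real.log_prod fun b _ => by exact_mod_cast (minFac_pos b).ne').symm
    _ ≤ Real.log a := Real.log_le_log (by exact_mod_cast Finset.prod_pos fun b _ => minFac_pos b)
        (by exact_mod_cast Nat.le_of_dvd (Nat.pos_of_ne_zero ha) hdvd)

theorem Finset.sum_mul_card_filter_eq_sum_map {α β R : Type*} [CommSemiring R] (B : Finset β)
    (A : Multiset α) (f : β → R) (p : α → β → Prop) [∀ a b, Decidable (p a b)] :
    ∑ b ∈ B, f b * (A.filter (p · b)).card = (A.map fun a => ∑ b ∈ B with p a b, f b).sum := by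
  induction A using Multiset.induction_on with
  | empty => simp
  | cons a A ih =>
    rw [Multiset.map_cons, Multiset.sum_cons, ← ih, Finset.sum_filter, ← Finset.sum_add_distrib]
    refine Finset.sum_congr rfl fun b _ => ?_
    by_cases h : p a b <;> simp [h, mul_add, add_comm]

theorem sum_vonMangoldt_mul_card_filter_not_coprime_le {N : ℕ} {A : Multiset ℕ}
    (hA : ∀ a ∈ A, a ∈ Finset.Icc 1 N) {B : Finset ℕ} (hBpp : ∀ b ∈ B, IsPrimePow b)
    (hcop : (B : Set ℕ).Pairwise Coprime) :
    ∑ b ∈ B, Λ b * (A.filter (¬ Coprime · b)).card ≤ Multiset.card A * Real.log N := by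
  rw [Finset.sum_mul_card_filter_eq_sum_map]
  refine (Multiset.sum_le_card_nsmul _ (Real.log N) fun y hy => ?_).trans (by simp)
  obtain ⟨a, ha, rfl⟩ := Multiset.mem_map.1 hy
  obtain ⟨ha1, haN⟩ := Finset.mem_Icc.1 (hA a ha)
  exact (sum_filter_not_coprime_vonMangoldt_le_log (by omega) hBpp hcop).trans
    (Real.log_le_log (by exact_mod_cast ha1) (by exact_mod_cast haN))

theorem multiset_incomplete_sums_bound (ε : ℝ) (hε : 0 < ε) (N : ℕ) (A : Multiset ℕ)
    (hA : ∀ a ∈ A, a ∈ Finset.Icc 1 N)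
    (B : Finset ℕ) (hBpp : ∀ b ∈ B, IsPrimePow b)
    (hcop : (B : Set ℕ).Pairwise Nat.Coprime)
    (hmiss : ∀ b ∈ B, ∃ r : ℕ, ∀ s : Multiset ℕ, s ≤ A → s ≠ 0 → s.sum % b ≠ r % b)
    (hΛ : (1 + ε) * Real.log N < ∑ b ∈ B, ArithmeticFunction.vonMangoldt b) :
    (Multiset.card A : ℝ) ≤ (1 + ε⁻¹) * ((B.sup id : ℕ) : ℝ) := by
  set x : ℝ := (Multiset.card A : ℝ)
  set m : ℕ := B.sup id
  have hcount : ∀ b ∈ B, x - m ≤ (A.filter (¬ Coprime · b)).card := by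
    intro b hb
    obtain ⟨r, hr⟩ := hmiss b hb
    have := Multiset.card_le_card_filter_not_coprime_add (hBpp b hb).ne_zero hr
    have hbm : b ≤ m := Finset.le_sup (f := id) hb
    rw [sub_le_iff_le_add, show x = (Multiset.card A : ℝ) from rfl]
    exact_mod_cast this.trans (Nat.add_le_add_left hbm _)
  have hkey : (x - m) * ∑ b ∈ B, Λ b ≤ x * Real.log N := by
    refine le_trans ?_ (sum_vonMangoldt_mul_card_filter_not_coprime_le hA hBpp hcop)
    rw [Finset.mul_sum]
    exact Finset.sum_le_sum fun b hb => by
      rw [mul_comm]; exact mul_le_mul_of_nonneg_left (hcount b hb) vonMangoldt_nonneg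
  have hlogN : 0 ≤ Real.log N := Real.log_natCast_nonneg N
  have hS : 0 < ∑ b ∈ B, Λ b := by nlinarith
  have hx : 0 ≤ x := Nat.cast_nonneg _
  have h1 : (x - m) * (1 + ε) ≤ x := le_of_mul_le_mul_right (by nlinarith) hS
  have h2 : (1 + ε⁻¹) * m - x = ε⁻¹ * ((1 + ε) * m - ε * x) := by field_simp; ring
  nlinarith [inv_pos.2 hε]
end

section
/- Let n be a positive integer and let A be a finite multiset of elements of ℤ/nℤ each of which is a unit (coprime to n). If |A| ≥ n (counting multiplicity), then Σ*(A) = ℤ/nℤ, i.e., every residue class modulo n is a nonempty sub-multiset sum of A. -/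
/-!
Let `S` be the set of nonempty subsums of the first `k` elements of `A`. Adjoining the next
element `a`, the new set contains `S`, `S + a` and `a`. If `S + a ⊆ S` and `S` is nonempty,
then `S` is stable under all multiples of `a`, which exhaust `ZMod n` since `a` is a unit, so
`S` is everything; otherwise the new set has gained an element. Hence the number of subsums grows
by one at each step until it reaches `n`.
-/

open Finset

section NonemptySubsums

variable {G : Type*} [AddCommGroup G] [DecidableEq G]

def nonemptySubsums (A : Multiset G) : Finset G :=
  ((A.powerset.filter (· ≠ 0)).map Multiset.sum).toFinset

theorem mem_nonemptySubsums {A : Multiset G} {x : G} :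
    x ∈ nonemptySubsums A ↔ ∃ s ≤ A, s ≠ 0 ∧ s.sum = x := by
  simp [nonemptySubsums, and_assoc]

theorem nonemptySubsums_subset_cons (a : G) (A : Multiset G) :
    nonemptySubsums A ⊆ nonemptySubsums (a ::ₘ A) := fun x hx => by
  obtain ⟨s, hsA, hs0, rfl⟩ := mem_nonemptySubsums.1 hx
  exact mem_nonemptySubsums.2 ⟨s, hsA.trans (Multiset.le_cons_self A a), hs0, rfl⟩

theorem add_mem_nonemptySubsums_cons {a x : G} {A : Multiset G} (hx : x ∈ nonemptySubsums A) :
    x + a ∈ nonemptySubsums (a ::ₘ A) := by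
  obtain ⟨s, hsA, -, rfl⟩ := mem_nonemptySubsums.1 hx
  exact mem_nonemptySubsums.2
    ⟨a ::ₘ s, Multiset.cons_le_cons a hsA, Multiset.cons_ne_zero,
      by rw [Multiset.sum_cons, add_comm]⟩

theorem mem_nonemptySubsums_cons (a : G) (A : Multiset G) : a ∈ nonemptySubsums (a ::ₘ A) :=
  mem_nonemptySubsums.2 ⟨{a}, by simp, by simp, by simp⟩

end NonemptySubsums

section Growth

variable {G : Type*} [AddCommGroup G] [Fintype G] {a : G}

theorem Finset.eq_univ_of_add_mem (ha : AddSubgroup.zmultiples a = ⊤) {S : Finset G}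
    (hS : S.Nonempty) (hSa : ∀ y ∈ S, y + a ∈ S) : S = univ := by
  obtain ⟨y, hy⟩ := hS
  have hmul : ∀ k : ℕ, y + k • a ∈ S := by
    intro k
    induction k with
    | zero => simpa using hy
    | succ k ih => simpa [succ_nsmul, add_assoc] using hSa _ ih
  refine eq_univ_of_forall fun z => ?_
  obtain ⟨k, hk⟩ := (AddSubmonoid.mem_multiples_iff _ _).1
    (mem_multiples_iff_mem_zmultiples.2 (ha ▸ AddSubgroup.mem_top (z - y)))
  simpa [hk] using hmul k

variable [DecidableEq G]

theorem min_card_succ_le_card (ha : AddSubgroup.zmultiples a = ⊤) {S T : Finset G}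
    (haT : a ∈ T) (hST : S ⊆ T) (hSaT : ∀ y ∈ S, y + a ∈ T) :
    min (Fintype.card G) (#S + 1) ≤ #T := by
  by_cases hclosed : ∀ y ∈ S, y + a ∈ S
  · rcases S.eq_empty_or_nonempty with rfl | hS
    · exact (min_le_right _ _).trans (card_pos.2 ⟨a, haT⟩)
    · rw [← card_univ, ← eq_univ_of_add_mem ha hS hclosed]
      exact (min_le_left _ _).trans (card_le_card hST)
  · obtain ⟨y, hy, hya⟩ := not_forall₂.1 hclosed
    rw [← card_insert_of_notMem hya]
    exact (min_le_right _ _).trans (card_le_card (insert_subset (hSaT y hy) hST))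

theorem min_card_le_card_nonemptySubsums (A : Multiset G)
    (hA : ∀ a ∈ A, AddSubgroup.zmultiples a = ⊤) :
    min (Fintype.card G) (Multiset.card A) ≤ #(nonemptySubsums A) := by
  induction A using Multiset.induction_on with
  | empty => simp
  | cons a A ih =>
    have hgrow := min_card_succ_le_card (hA a (Multiset.mem_cons_self a A))
      (mem_nonemptySubsums_cons a A) (nonemptySubsums_subset_cons a A)
      (fun _ => add_mem_nonemptySubsums_cons)
    have ih := ih fun b hb => hA b (Multiset.mem_cons_of_mem hb)
    rw [Multiset.card_cons]
    omega

theorem nonemptySubsums_eq_univ (A : Multiset G) (hA : ∀ a ∈ A, AddSubgroup.zmultiples a = ⊤)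
    (hcard : Fintype.card G ≤ Multiset.card A) : nonemptySubsums A = univ := by
  have := min_card_le_card_nonemptySubsums A hA
  exact eq_univ_of_card _ (le_antisymm (card_le_univ _) (by omega))

end Growth

theorem ZMod.zmultiples_eq_top_of_isUnit {n : ℕ} {a : ZMod n} (ha : IsUnit a) :
    AddSubgroup.zmultiples a = ⊤ := by
  obtain ⟨u, rfl⟩ := ha
  refine eq_top_iff.2 fun x _ => ?_
  obtain ⟨k, hk⟩ := ZMod.intCast_surjective (x * ↑u⁻¹ : ZMod n)
  exact ⟨k, by simp only [zsmul_eq_mul, hk, mul_assoc, Units.inv_mul, mul_one]⟩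

theorem vu_units_complete (n : ℕ) (hn : 0 < n) (A : Multiset (ZMod n))
    (hA : ∀ a ∈ A, IsUnit a) (hcard : n ≤ Multiset.card A) :
    ∀ x : ZMod n, ∃ s : Multiset (ZMod n), s ≤ A ∧ s ≠ 0 ∧ s.sum = x := by
  have : NeZero n := ⟨hn.ne'⟩
  have huniv : nonemptySubsums A = univ :=
    nonemptySubsums_eq_univ A (fun a ha => ZMod.zmultiples_eq_top_of_isUnit (hA a ha))
      (by rwa [ZMod.card])
  exact fun x => mem_nonemptySubsums.1 (huniv ▸ mem_univ x)
end

section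
/- Let d ≥ 1, M_1,…,M_d be positive integers, L = M_1⋯M_d, and define a_1 = 1 and a_n = 2L·Σ_{i=1}^{n-1} a_i M_i + 1 for 2 ≤ n ≤ d. Then the map ψ : [M_1 L] × ⋯ × [M_d L] → ℤ given by ψ(x_1,…,x_d) = Σ_{i=1}^d a_i x_i is injective, its image is contained in [1, 4^d (M_1⋯M_d)^{d+1}], and ψ is a Freiman 2-isomorphism onto its image (i.e., ψ(x)+ψ(y) = ψ(z)+ψ(w) if and only if x+y = z+w for x,y,z,w in the box). -/
/-!
Coordinates of `x + y` for `x, y` in the box lie in `[0, 2 M i L]`, and the weight `a (n + 1)`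
exceeds `∑_{i ≤ n} a i * 2 M i L`, the largest contribution of the lower coordinates. So `ψ`
reads off the coordinates of `x + y` (and of `x`) like the digits of a mixed radix expansion,
which gives the Freiman property and injectivity.
For the size bound, the recursion telescopes to
`1 + 2L ∑_{i ≤ n} a i M i = ∏_{i ≤ n} (1 + 2L M i)`, and `1 + 2L M i ≤ 4L M i`.
-/

open Finset

theorem eq_and_eq_of_add_mul_eq_add_mul {b r s u v : ℕ} (hr : r < b) (hs : s < b)
    (h : r + b * u = s + b * v) : r = s ∧ u = v := by
  have hb : 0 < b := hr.pos
  obtain ⟨hu, hr'⟩ := (Nat.div_mod_unique hb).2 ⟨h, hr⟩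
  obtain ⟨hv, hs'⟩ := (Nat.div_mod_unique hb).2 ⟨rfl, hs⟩
  exact ⟨hr'.symm.trans hs', hu.symm.trans hv⟩

theorem eq_of_sum_Icc_mul_eq_of_lt {a B u v : ℕ → ℕ} {d : ℕ}
    (ha : ∀ n < d, ∑ i ∈ Icc 1 n, a i * B i < a (n + 1))
    (hu : ∀ i ∈ Icc 1 d, u i ≤ B i) (hv : ∀ i ∈ Icc 1 d, v i ≤ B i)
    (h : ∑ i ∈ Icc 1 d, a i * u i = ∑ i ∈ Icc 1 d, a i * v i) :
    ∀ i ∈ Icc 1 d, u i = v i := by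
  induction d with
  | zero => simp
  | succ d ih =>
    have lower_lt (w : ℕ → ℕ) (hw : ∀ i ∈ Icc 1 (d + 1), w i ≤ B i) :
        ∑ i ∈ Icc 1 d, a i * w i < a (d + 1) :=
      (sum_le_sum fun i hi => Nat.mul_le_mul_left _
        (hw i (Icc_subset_Icc_right d.le_succ hi))).trans_lt (ha d d.lt_succ_self)
    rw [sum_Icc_succ_top (by omega), sum_Icc_succ_top (by omega)] at h
    obtain ⟨h_lower, h_top⟩ := eq_and_eq_of_add_mul_eq_add_mul (lower_lt u hu) (lower_lt v hv) h
    intro i hi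
    obtain ⟨hi1, hid⟩ := mem_Icc.1 hi
    rcases hid.lt_or_eq with hid | rfl
    · have restrict : Icc 1 d ⊆ Icc 1 (d + 1) := Icc_subset_Icc_right d.le_succ
      exact ih (fun n hn => ha n (by omega)) (fun j hj => hu j (restrict hj))
        (fun j hj => hv j (restrict hj)) h_lower i (mem_Icc.2 ⟨hi1, by omega⟩)
    · exact h_top

theorem mul_sum_Icc_add_one_eq_prod {R : Type*} [CommSemiring R] {a m : ℕ → R} {c : R} {d : ℕ}
    (ha : ∀ n < d, a (n + 1) = c * ∑ i ∈ Icc 1 n, a i * m i + 1) :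
    c * ∑ i ∈ Icc 1 d, a i * m i + 1 = ∏ i ∈ Icc 1 d, (c * m i + 1) := by
  induction d with
  | zero => simp
  | succ d ih =>
    rw [sum_Icc_succ_top (by omega), prod_Icc_succ_top (by omega),
      ← ih fun n hn => ha n (by omega), ha d d.lt_succ_self]
    ring

theorem sum_mul_add_sum_mul_eq_iff_of_lt {a B x y z w : ℕ → ℕ} {d : ℕ}
    (ha : ∀ n < d, ∑ i ∈ Icc 1 n, a i * (2 * B i) < a (n + 1))
    (hx : ∀ i ∈ Icc 1 d, x i ≤ B i) (hy : ∀ i ∈ Icc 1 d, y i ≤ B i)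
    (hz : ∀ i ∈ Icc 1 d, z i ≤ B i) (hw : ∀ i ∈ Icc 1 d, w i ≤ B i) :
    ∑ i ∈ Icc 1 d, a i * x i + ∑ i ∈ Icc 1 d, a i * y i =
        ∑ i ∈ Icc 1 d, a i * z i + ∑ i ∈ Icc 1 d, a i * w i ↔
      ∀ i ∈ Icc 1 d, x i + y i = z i + w i := by
  simp only [← sum_add_distrib, ← mul_add]
  refine ⟨eq_of_sum_Icc_mul_eq_of_lt ha (fun i hi => ?_) (fun i hi => ?_), fun h => ?_⟩
  · linarith [hx i hi, hy i hi]
  · linarith [hz i hi, hw i hi]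
  · exact sum_congr rfl fun i hi => by rw [h i hi]

theorem mul_sum_Icc_mul_le_pow_mul_prod {a m : ℕ → ℕ} {L d : ℕ} (hL : 0 < L)
    (hm : ∀ i ∈ Icc 1 d, 0 < m i)
    (ha : ∀ n < d, a (n + 1) = 2 * L * ∑ i ∈ Icc 1 n, a i * m i + 1) :
    L * ∑ i ∈ Icc 1 d, a i * m i ≤ (4 * L) ^ d * ∏ i ∈ Icc 1 d, m i :=
  calc L * ∑ i ∈ Icc 1 d, a i * m i
      ≤ 2 * L * ∑ i ∈ Icc 1 d, a i * m i + 1 := by rw [mul_assoc]; omega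
    _ = ∏ i ∈ Icc 1 d, (2 * L * m i + 1) := mul_sum_Icc_add_one_eq_prod ha
    _ ≤ ∏ i ∈ Icc 1 d, (4 * L * m i) :=
      prod_le_prod' fun i hi => by nlinarith [Nat.mul_pos hL (hm i hi)]
    _ = (4 * L) ^ d * ∏ i ∈ Icc 1 d, m i := by simp [prod_mul_distrib]

theorem freiman_iso_box (d : ℕ) (hd : 1 ≤ d) (M : ℕ → ℕ)
    (hM : ∀ i ∈ Finset.Icc 1 d, 0 < M i)
    (L : ℕ) (hL : L = ∏ i ∈ Finset.Icc 1 d, M i)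
    (a : ℕ → ℕ) (ha1 : a 1 = 1)
    (harec : ∀ n, 2 ≤ n → n ≤ d →
      a n = 2 * L * (∑ i ∈ Finset.Icc 1 (n - 1), a i * M i) + 1) :
    (∀ x y : ℕ → ℕ,
        (∀ i ∈ Finset.Icc 1 d, x i ∈ Finset.Icc 1 (M i * L)) →
        (∀ i ∈ Finset.Icc 1 d, y i ∈ Finset.Icc 1 (M i * L)) →
        (∑ i ∈ Finset.Icc 1 d, a i * x i) = (∑ i ∈ Finset.Icc 1 d, a i * y i) →
        ∀ i ∈ Finset.Icc 1 d, x i = y i) ∧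
    (∀ x : ℕ → ℕ, (∀ i ∈ Finset.Icc 1 d, x i ∈ Finset.Icc 1 (M i * L)) →
        (∑ i ∈ Finset.Icc 1 d, a i * x i) ∈
          Finset.Icc 1 (4 ^ d * (∏ i ∈ Finset.Icc 1 d, M i) ^ (d + 1))) ∧
    (∀ x y z w : ℕ → ℕ,
        (∀ i ∈ Finset.Icc 1 d, x i ∈ Finset.Icc 1 (M i * L)) →
        (∀ i ∈ Finset.Icc 1 d, y i ∈ Finset.Icc 1 (M i * L)) →
        (∀ i ∈ Finset.Icc 1 d, z i ∈ Finset.Icc 1 (M i * L)) →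
        (∀ i ∈ Finset.Icc 1 d, w i ∈ Finset.Icc 1 (M i * L)) →
        ((∑ i ∈ Finset.Icc 1 d, a i * x i) + (∑ i ∈ Finset.Icc 1 d, a i * y i) =
            (∑ i ∈ Finset.Icc 1 d, a i * z i) + (∑ i ∈ Finset.Icc 1 d, a i * w i) ↔
          ∀ i ∈ Finset.Icc 1 d, x i + y i = z i + w i)) := by
  have hrec : ∀ n < d, a (n + 1) = 2 * L * ∑ i ∈ Icc 1 n, a i * M i + 1 := by
    intro n hn
    rcases n.eq_zero_or_pos with rfl | _
    · simpa using ha1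
    · simpa using harec (n + 1) (by omega) (by omega)
  have growth : ∀ n < d, ∑ i ∈ Icc 1 n, a i * (2 * (M i * L)) < a (n + 1) := fun n hn => by
    rw [hrec n hn, mul_sum]
    exact Nat.lt_succ_of_le (sum_congr rfl fun i _ => by ring).le
  have le_of_mem_box (x : ℕ → ℕ) (hx : ∀ i ∈ Icc 1 d, x i ∈ Icc 1 (M i * L)) :
      ∀ i ∈ Icc 1 d, x i ≤ M i * L := fun i hi => (mem_Icc.1 (hx i hi)).2
  refine ⟨fun x y hx hy => eq_of_sum_Icc_mul_eq_of_lt growth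
      (fun i hi => (le_of_mem_box x hx i hi).trans (Nat.le_mul_of_pos_left _ two_pos))
      (fun i hi => (le_of_mem_box y hy i hi).trans (Nat.le_mul_of_pos_left _ two_pos)),
    fun x hx => mem_Icc.2 ⟨?_, ?_⟩,
    fun x y z w hx hy hz hw => sum_mul_add_sum_mul_eq_iff_of_lt growth (le_of_mem_box x hx)
      (le_of_mem_box y hy) (le_of_mem_box z hz) (le_of_mem_box w hw)⟩
  · have h1 : 1 ∈ Icc 1 d := mem_Icc.2 ⟨le_rfl, hd⟩
    calc 1 ≤ a 1 * x 1 := by rw [ha1, one_mul]; exact (mem_Icc.1 (hx 1 h1)).1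
      _ ≤ ∑ i ∈ Icc 1 d, a i * x i :=
        single_le_sum (f := fun i => a i * x i) (fun i _ => Nat.zero_le _) h1
  · calc ∑ i ∈ Icc 1 d, a i * x i
        ≤ L * ∑ i ∈ Icc 1 d, a i * M i := by
          rw [mul_sum]
          exact sum_le_sum fun i hi => by nlinarith [le_of_mem_box x hx i hi]
      _ ≤ (4 * L) ^ d * ∏ i ∈ Icc 1 d, M i :=
        mul_sum_Icc_mul_le_pow_mul_prod (hL ▸ prod_pos hM) hM hrec
      _ = 4 ^ d * (∏ i ∈ Icc 1 d, M i) ^ (d + 1) := by rw [← hL]; ring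
end

section
/- Let A be a finite multiset of positive integers with |A| = 2ℓ even. Then either some element of A has multiplicity at least ℓ (in which case Σ*(A) contains the arithmetic progression {a, 2a, …, ℓa} for that element a), or A can be partitioned into ℓ sub-multisets A_1, …, A_ℓ each consisting of exactly two distinct elements; in the latter case A_1 + A_2 + ⋯ + A_ℓ ⊆ Σ*(A) where each A_i is a 2-element set. -/
/-!
If no element has multiplicity `ℓ`, then every multiplicity is at most `ℓ = |A| / 2`, and `A`
splits into `ℓ` pairs of distinct elements: pair off one copy of each of the two most frequent
elements and induct. Picking one element from each pair gives a sub-multiset of `A`, so every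
sum in `A_1 + ⋯ + A_ℓ` lies in `Σ*(A)`.
-/

namespace Multiset

variable {α : Type*}

theorem sum_count_le_card [DecidableEq α] (s : Finset α) (m : Multiset α) :
    ∑ a ∈ s, m.count a ≤ card m :=
  calc ∑ a ∈ s, m.count a ≤ ∑ a ∈ s ∪ m.toFinset, m.count a :=
        Finset.sum_le_sum_of_subset Finset.subset_union_left
    _ = card m := sum_count_eq_card fun _ ha => Finset.mem_union_right _ (mem_toFinset.2 ha)

/-- `a` and `b` are the two most frequent elements, so any third `c` has `3 * m.count c ≤ card m`. -/
theorem exists_pair_le_forall_count_sub_le [DecidableEq α] {m : Multiset α} {n : ℕ}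
    (hcard : card m = 2 * (n + 1)) (hcount : ∀ a, m.count a ≤ n + 1) :
    ∃ a b, a ≠ b ∧ {a, b} ≤ m ∧ ∀ c, (m - {a, b}).count c ≤ n := by
  have hne : m.toFinset.Nonempty := by
    rw [toFinset_nonempty]; rintro rfl; simp at hcard
  obtain ⟨a, ha, ha_max⟩ := m.toFinset.exists_max_image m.count hne
  have hne' : (m.toFinset.erase a).Nonempty := by
    by_contra! h
    have : m.count a = card m := count_eq_card.2 fun x hx => by
      by_contra hxa
      simpa [h] using Finset.mem_erase.2 ⟨Ne.symm hxa, mem_toFinset.2 hx⟩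
    have := hcount a
    omega
  obtain ⟨b, hb, hb_max⟩ := (m.toFinset.erase a).exists_max_image m.count hne'
  obtain ⟨hba, hb⟩ := Finset.mem_erase.1 hb
  rw [mem_toFinset] at ha hb
  refine ⟨a, b, hba.symm, (le_iff_subset (by simp [hba.symm])).2 ?_, fun c => ?_⟩
  · simp [insert_eq_cons, cons_subset, ha, hb]
  rw [count_sub]
  by_cases hca : c = a
  · subst hca; have := hcount c; simp [hba.symm]; omega
  by_cases hcb : c = b
  · subst hcb; have := hcount c; simp [hba]; omega
  have hc_le : m.count c ≤ m.count b := by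
    by_cases hc : c ∈ m
    · exact hb_max c (Finset.mem_erase.2 ⟨hca, mem_toFinset.2 hc⟩)
    · simp [count_eq_zero_of_notMem hc]
  have hb_le : m.count b ≤ m.count a := ha_max b (mem_toFinset.2 hb)
  have hsum := sum_count_le_card {a, b, c} m
  rw [Finset.sum_insert (by simp [Ne.symm hba, Ne.symm hca]),
    Finset.sum_pair (Ne.symm hcb)] at hsum
  omega

theorem exists_pairing_of_forall_count_le [DecidableEq α] :
    ∀ {n : ℕ} {m : Multiset α}, card m = 2 * n → (∀ a, m.count a ≤ n) →
      ∃ f : Fin n → Multiset α, ∑ i, f i = m ∧ ∀ i, ∃ a b, a ≠ b ∧ f i = {a, b}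
  | 0, m, hcard, _ => ⟨0, by simpa [eq_comm] using hcard, fun i => i.elim0⟩
  | n + 1, m, hcard, hcount => by
    obtain ⟨a, b, hab, hle, hcount'⟩ := exists_pair_le_forall_count_sub_le hcard hcount
    have hcard' : card (m - {a, b}) = 2 * n := by
      rw [card_sub hle, hcard, card_pair]; omega
    obtain ⟨f, hsum, hpair⟩ := exists_pairing_of_forall_count_le hcard' hcount'
    refine ⟨Fin.cons {a, b} f, ?_, Fin.cases ⟨a, b, hab, rfl⟩ hpair⟩
    rw [Fin.sum_cons, hsum, add_tsub_cancel_of_le hle]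

theorem map_univ_le_sum_of_forall_mem {ι : Type*} [Fintype ι] {f : ι → Multiset α}
    {g : ι → α} (hg : ∀ i, g i ∈ f i) : Finset.univ.val.map g ≤ ∑ i, f i := by
  calc Finset.univ.val.map g = ∑ i, {g i} := by
        rw [Finset.sum_eq_multiset_sum, ← sum_map_singleton (map g _), map_map]; rfl
    _ ≤ ∑ i, f i := Finset.sum_le_sum fun i _ => singleton_le.2 (hg i)

end Multiset

theorem multiset_pairing_dichotomy_general (A : Multiset ℕ)
    (ℓ : ℕ) (hℓ : 0 < ℓ) (hcard : Multiset.card A = 2 * ℓ) :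
    (∃ a ∈ A, ℓ ≤ A.count a ∧ ∀ j, 1 ≤ j → j ≤ ℓ →
        ∃ s : Multiset ℕ, s ≤ A ∧ s ≠ 0 ∧ s.sum = j * a) ∨
    (∃ f : Fin ℓ → Multiset ℕ, (∑ i, f i) = A ∧
      (∀ i, Multiset.card (f i) = 2 ∧ (f i).toFinset.card = 2) ∧
      ∀ g : Fin ℓ → ℕ, (∀ i, g i ∈ f i) →
        ∃ s : Multiset ℕ, s ≤ A ∧ s ≠ 0 ∧ s.sum = ∑ i, g i) := by
  by_cases hfreq : ∃ a ∈ A, ℓ ≤ A.count a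
  · obtain ⟨a, ha, hcount⟩ := hfreq
    refine .inl ⟨a, ha, hcount, fun j hj hjℓ => ⟨Multiset.replicate j a, ?_, ?_, by simp⟩⟩
    · exact Multiset.le_count_iff_replicate_le.1 (hjℓ.trans hcount)
    · simpa [← Multiset.card_eq_zero] using Nat.one_le_iff_ne_zero.1 hj
  · push Not at hfreq
    have hcount (a : ℕ) : A.count a ≤ ℓ := by
      by_cases ha : a ∈ A
      · exact (hfreq a ha).le
      · simp [Multiset.count_eq_zero_of_notMem ha]
    obtain ⟨f, hsum, hpair⟩ := Multiset.exists_pairing_of_forall_count_le hcard hcount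
    refine .inr ⟨f, hsum, fun i => ?_, fun g hg => ?_⟩
    · obtain ⟨a, b, hab, hfi⟩ := hpair i
      simp [hfi, Finset.card_pair hab]
    · refine ⟨Finset.univ.val.map g, hsum ▸ Multiset.map_univ_le_sum_of_forall_mem hg, ?_, rfl⟩
      simpa [← Multiset.card_eq_zero] using hℓ.ne'

theorem multiset_pairing_dichotomy (A : Multiset ℕ) (hpos : ∀ a ∈ A, 0 < a)
    (ℓ : ℕ) (hℓ : 0 < ℓ) (hcard : Multiset.card A = 2 * ℓ) :
    (∃ a ∈ A, ℓ ≤ A.count a ∧ ∀ j, 1 ≤ j → j ≤ ℓ →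
        ∃ s : Multiset ℕ, s ≤ A ∧ s ≠ 0 ∧ s.sum = j * a) ∨
    (∃ f : Fin ℓ → Multiset ℕ, (∑ i, f i) = A ∧
      (∀ i, Multiset.card (f i) = 2 ∧ (f i).toFinset.card = 2) ∧
      ∀ g : Fin ℓ → ℕ, (∀ i, g i ∈ f i) →
        ∃ s : Multiset ℕ, s ≤ A ∧ s ≠ 0 ∧ s.sum = ∑ i, g i) :=
  multiset_pairing_dichotomy_general A ℓ hℓ hcard
end

section
/- Suppose a_0 is a nonnegative integer and a_1, …, a_d ∈ {1,…,N} are positive integers (not necessarily distinct) such that every element of the Hilbert cube H(a_0; a_1,…,a_d) is a powerful number, where the Hilbert cube is a_0 + {0,a_1} + ⋯ + {0,a_d} if a_0 > 0, and is the set of nonempty subset sums if a_0 = 0. Then d ≤ C·log N for some absolute constant C (for all N ≥ 2). -/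
/-!
Fix a prime `p` and call an index `i` a unit if `p ∤ aᵢ`. By Cauchy–Davenport, any `p - 1` units
have subset sums covering `ℤ/p`, so `p` units contain a nonempty `I` with `p ∣ a₀ + ∑_I a`; as this
number is powerful, `p²` divides it, and then `p ∣ ∑_S a` forces `p² ∣ ∑_S a` for every `S` disjoint
from `I`. That is impossible on `2p - 1` further units: it would make `∑_S a mod p²` an additive
function of `∑_S a mod p`, i.e. an additive lift `ℤ/p → ℤ/p²` of the identity. Hence fewer than
`3p` of the `aᵢ` are prime to `p`.

So for `P ≈ d/6` every prime `p ≤ P` divides at least half of the `aᵢ`, and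
`N^d ≥ ∏ aᵢ ≥ (∏_{p ≤ P} p)^{d/2} = exp (θ(P) d/2)`. Chebyshev's bound `θ(P) ≫ P` gives `d ≪ log N`.
-/

def Powerful (n : ℕ) : Prop := ∀ p : ℕ, p.Prime → p ∣ n → p ^ 2 ∣ n

open Finset Real Filter Asymptotics Chebyshev
open scoped Pointwise

namespace Chebyshev

theorem eventually_mul_le_theta : ∀ᶠ x in atTop, log 2 / 2 * x ≤ θ x := by
  have hlog : (fun x : ℝ => log (x + 2)) =o[atTop] id :=
    (isLittleO_log_id_atTop.comp_tendsto (tendsto_atTop_add_const_right atTop 2 tendsto_id))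
      |>.trans_isBigO ((isBigO_refl _ _).add (isLittleO_const_id_atTop 2).isBigO)
  have hsqrt : (fun x : ℝ => √x * log x) =o[atTop] id := by
    refine ((isBigO_refl sqrt atTop).mul_isLittleO
      (isLittleO_log_rpow_atTop (by norm_num : (0 : ℝ) < 1 / 2))).congr' EventuallyEq.rfl ?_
    filter_upwards [eventually_ge_atTop 0] with x hx
    rw [sqrt_eq_rpow, ← rpow_add' hx (by norm_num)]
    norm_num
  have herr := ((isLittleO_const_id_atTop (log 2)).add (hlog.add (hsqrt.const_mul_left 2))).bound
    (by positivity : 0 < log 2 / 2)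
  filter_upwards [eventually_ge_atTop 1, herr] with x hx hx'
  rw [id, Real.norm_of_nonneg (by linarith : (0 : ℝ) ≤ x)] at hx'
  linarith [theta_ge' hx, (le_norm_self _).trans hx']

theorem exists_pos_mul_le_theta : ∃ c > 0, ∀ x ≥ 2, c * x ≤ θ x := by
  obtain ⟨x₀, hx₀⟩ := eventually_atTop.mp eventually_mul_le_theta
  set M := max x₀ 2
  have hM : 2 ≤ M := le_max_right _ _
  have hlog2 : 0 < log 2 := log_pos one_lt_two
  refine ⟨log 2 / (2 * M), by positivity, fun x hx => ?_⟩
  rcases le_total x M with hxM | hMx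
  · have hθ2 : θ 2 = log 2 := by
      rw [show (2 : ℝ) = ((2 : ℕ) : ℝ) by norm_num, theta_eq_sum_primesLE_log,
        show Nat.primesLE 2 = {2} by decide, sum_singleton, Nat.cast_ofNat]
    calc log 2 / (2 * M) * x ≤ log 2 / (2 * M) * M := by gcongr
      _ ≤ θ 2 := by rw [hθ2, div_mul_eq_mul_div, div_le_iff₀ (by positivity)]; nlinarith
      _ ≤ θ x := theta_mono hx
  · calc log 2 / (2 * M) * x ≤ log 2 / 2 * x := by gcongr; linarith
      _ ≤ θ x := hx₀ x ((le_max_left _ _).trans hMx)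

end Chebyshev

section SubsetSums

variable {ι : Type*}

/-- Unlike `Finset.subsetSum`, equal values `f i = f j` at distinct indices count separately. -/
def indexedSubsetSums {M : Type*} [AddCommMonoid M] [DecidableEq M] (f : ι → M) (R : Finset ι) :
    Finset M :=
  R.powerset.image fun S => ∑ i ∈ S, f i

lemma mem_indexedSubsetSums {M : Type*} [AddCommMonoid M] [DecidableEq M] {f : ι → M}
    {R : Finset ι} {t : M} : t ∈ indexedSubsetSums f R ↔ ∃ S ⊆ R, ∑ i ∈ S, f i = t := by
  simp [indexedSubsetSums]

variable [DecidableEq ι]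

lemma indexedSubsetSums_add_pair_subset {M : Type*} [AddCommMonoid M] [DecidableEq M]
    (f : ι → M) {R : Finset ι} {i : ι} (hi : i ∉ R) :
    indexedSubsetSums f R + {0, f i} ⊆ indexedSubsetSums f (insert i R) := by
  intro t ht
  obtain ⟨s, hs, x, hx, rfl⟩ := mem_add.mp ht
  obtain ⟨S, hSR, rfl⟩ := mem_indexedSubsetSums.mp hs
  rw [mem_indexedSubsetSums]
  rcases mem_insert.mp hx with rfl | hx
  · exact ⟨S, hSR.trans (subset_insert i R), (add_zero _).symm⟩
  · rw [mem_singleton.mp hx]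
    exact ⟨insert i S, insert_subset_insert i hSR, by rw [sum_insert fun h => hi (hSR h), add_comm]⟩

lemma min_le_card_indexedSubsetSums {p : ℕ} (hp : p.Prime) (f : ι → ZMod p) {R : Finset ι}
    (hf : ∀ i ∈ R, f i ≠ 0) : min p (#R + 1) ≤ #(indexedSubsetSums f R) := by
  induction R using Finset.induction_on with
  | empty => simp [indexedSubsetSums]
  | @insert i R hi ih =>
    have hpair : #({0, f i} : Finset (ZMod p)) = 2 :=
      card_pair (hf i (mem_insert_self i R)).symm
    calc min p (#(insert i R) + 1)
        ≤ min p (#(indexedSubsetSums f R) + #({0, f i} : Finset (ZMod p)) - 1) := by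
          rw [card_insert_of_notMem hi, hpair]
          have := ih fun j hj => hf j (mem_insert_of_mem hj)
          omega
      _ ≤ #(indexedSubsetSums f R + {0, f i}) :=
          ZMod.cauchy_davenport hp ⟨0, mem_indexedSubsetSums.mpr ⟨∅, empty_subset _, sum_empty⟩⟩
            (insert_nonempty _ _)
      _ ≤ #(indexedSubsetSums f (insert i R)) :=
          card_le_card (indexedSubsetSums_add_pair_subset f hi)

lemma exists_subset_sum_eq {p : ℕ} (hp : p.Prime) {f : ι → ZMod p} {R : Finset ι}
    (hf : ∀ i ∈ R, f i ≠ 0) (hR : p ≤ #R + 1) (t : ZMod p) : ∃ S ⊆ R, ∑ i ∈ S, f i = t := by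
  have : NeZero p := ⟨hp.ne_zero⟩
  have huniv : indexedSubsetSums f R = univ :=
    eq_univ_of_card _ (le_antisymm (card_le_univ _)
      (by simpa [ZMod.card, hR] using min_le_card_indexedSubsetSums hp f hf))
  exact mem_indexedSubsetSums.mp (huniv ▸ mem_univ t)

end SubsetSums

section NoAdditiveLift

variable {ι : Type*} [DecidableEq ι] {p : ℕ}

lemma natCast_ne_zero_of_not_dvd {b : ℕ} (h : ¬ p ∣ b) : (b : ZMod p) ≠ 0 :=
  mt (ZMod.natCast_eq_zero_iff _ _).mp h

lemma cast_sum_eq_of_cast_sum_eq (hp : p.Prime) {b : ι → ℕ} {G F S T : Finset ι}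
    (hG : ∀ E ⊆ G, ∑ i ∈ E, (b i : ZMod p) = 0 → ∑ i ∈ E, (b i : ZMod (p ^ 2)) = 0)
    (hFG : F ⊆ G) (hFb : ∀ i ∈ F, ¬ p ∣ b i) (hF : p ≤ #F + 1)
    (hSG : S ⊆ G) (hTG : T ⊆ G) (hSF : Disjoint S F) (hTF : Disjoint T F)
    (hST : ∑ i ∈ S, (b i : ZMod p) = ∑ i ∈ T, (b i : ZMod p)) :
    ∑ i ∈ S, (b i : ZMod (p ^ 2)) = ∑ i ∈ T, (b i : ZMod (p ^ 2)) := by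
  obtain ⟨E, hEF, hE⟩ := exists_subset_sum_eq hp
    (fun i hi => natCast_ne_zero_of_not_dvd (hFb i hi)) hF (-∑ i ∈ S, (b i : ZMod p))
  have hcompl : ∀ W ⊆ G, Disjoint W F → ∑ i ∈ W, (b i : ZMod p) = ∑ i ∈ S, (b i : ZMod p) →
      ∑ i ∈ W, (b i : ZMod (p ^ 2)) = -∑ i ∈ E, (b i : ZMod (p ^ 2)) := by
    intro W hWG hWF hW
    have hWE : Disjoint W E := hWF.mono_right hEF
    have := hG (W ∪ E) (union_subset hWG (hEF.trans hFG))
      (by rw [sum_union hWE, hW, hE, add_neg_cancel])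
    rwa [sum_union hWE, add_eq_zero_iff_eq_neg] at this
  rw [hcompl S hSG hSF rfl, hcompl T hTG hTF hST.symm]

theorem exists_subset_dvd_sum_not_sq_dvd (hp : p.Prime) (b : ι → ℕ) {U : Finset ι}
    (hU : ∀ i ∈ U, ¬ p ∣ b i) (hcard : 2 * p ≤ #U + 1) :
    ∃ S ⊆ U, p ∣ ∑ i ∈ S, b i ∧ ¬ p ^ 2 ∣ ∑ i ∈ S, b i := by
  by_contra! hZ
  have hG : ∀ E ⊆ U, ∑ i ∈ E, (b i : ZMod p) = 0 → ∑ i ∈ E, (b i : ZMod (p ^ 2)) = 0 := by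
    intro E hE h
    simp only [← Nat.cast_sum, ZMod.natCast_eq_zero_iff] at h ⊢
    exact hZ E hE h
  obtain ⟨u, hu⟩ : U.Nonempty := card_pos.mp (by have := hp.two_le; omega)
  obtain ⟨R, hRU, hR⟩ := exists_subset_card_eq (s := U.erase u) (n := p - 1)
    (by rw [card_erase_of_mem hu]; omega)
  set F := U.erase u \ R
  have hFU : F ⊆ U := sdiff_subset.trans (erase_subset u U)
  have hF : p ≤ #F + 1 := by
    rw [card_sdiff_of_subset hRU, card_erase_of_mem hu]; omega
  have hRG : R ⊆ U := hRU.trans (erase_subset u U)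
  have huR : u ∉ R := fun h => notMem_erase u U (hRU h)
  have huF : u ∉ F := fun h => notMem_erase u U (sdiff_subset h)
  choose S hSR hS using exists_subset_sum_eq hp
    (fun i hi => natCast_ne_zero_of_not_dvd (hU i (hRG hi))) (by omega : p ≤ #R + 1)
  have hSF : ∀ t, Disjoint (S t) F := fun t => disjoint_sdiff.mono_left (hSR t)
  have hsum0 : ∑ i ∈ S 0, (b i : ZMod (p ^ 2)) = 0 := hG _ ((hSR 0).trans hRG) (hS 0)
  -- Adding `u` moves the representative of `-(n + 1) * b u` onto the class of the one of
  -- `-n * b u`, so their sums mod `p²` differ by `b u`; after `p` steps the class is `0` again.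
  have hstep : ∀ n : ℕ, ∑ i ∈ S (-(n * b u)), (b i : ZMod (p ^ 2)) + n * b u = 0 := by
    intro n
    induction n with
    | zero => simpa using hsum0
    | succ n ih =>
      have hinsert := cast_sum_eq_of_cast_sum_eq hp hG hFU (fun i hi => hU i (hFU hi)) hF
        (S := insert u (S (-((n + 1 : ℕ) * b u)))) (T := S (-(n * b u)))
        (insert_subset hu ((hSR _).trans hRG)) ((hSR _).trans hRG)
        (disjoint_insert_left.mpr ⟨huF, hSF _⟩) (hSF (-(n * b u)))
        (by rw [sum_insert fun h => huR (hSR _ h), hS, hS]; push_cast; ring)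
      rw [sum_insert fun h => huR (hSR _ h)] at hinsert
      push_cast at hinsert ⊢
      linear_combination hinsert + ih
  have hpu : ((p * b u : ℕ) : ZMod (p ^ 2)) = 0 := by
    have := hstep p
    rwa [ZMod.natCast_self, zero_mul, neg_zero, hsum0, zero_add, ← Nat.cast_mul] at this
  rw [ZMod.natCast_eq_zero_iff, pow_two] at hpu
  exact hU u hu ((Nat.mul_dvd_mul_iff_left hp.pos).mp hpu)

end NoAdditiveLift

section HilbertCube

variable {ι : Type*} [DecidableEq ι] {p : ℕ}

lemma exists_nonempty_dvd_add_sum (hp : p.Prime) (a0 : ℕ) {a : ι → ℕ} {Q : Finset ι}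
    (hQ : ∀ i ∈ Q, ¬ p ∣ a i) (hcard : p ≤ #Q) :
    ∃ I ⊆ Q, I.Nonempty ∧ p ∣ a0 + ∑ i ∈ I, a i := by
  obtain ⟨j, hj⟩ : Q.Nonempty := card_pos.mp (hp.pos.trans_le hcard)
  obtain ⟨S, hSQ, hS⟩ := exists_subset_sum_eq hp (f := fun i => (a i : ZMod p)) (R := Q.erase j)
    (fun i hi => natCast_ne_zero_of_not_dvd (hQ i (mem_of_mem_erase hi)))
    (by rw [card_erase_of_mem hj]; omega) (-(a0 + a j))
  have hjS : j ∉ S := fun h => notMem_erase j Q (hSQ h)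
  refine ⟨insert j S, insert_subset hj (hSQ.trans (erase_subset j Q)), insert_nonempty j S, ?_⟩
  rw [← ZMod.natCast_eq_zero_iff, sum_insert hjS]
  push_cast
  rw [hS]
  ring

theorem card_filter_not_dvd_lt [Fintype ι] (hp : p.Prime) {a0 : ℕ} {a : ι → ℕ}
    (hcube : ∀ I : Finset ι, (I.Nonempty ∨ a0 ≠ 0) → Powerful (a0 + ∑ i ∈ I, a i)) :
    #{i | ¬ p ∣ a i} < 3 * p := by
  by_contra! hcard
  set U := ({i | ¬ p ∣ a i} : Finset ι)
  have hU : ∀ i ∈ U, ¬ p ∣ a i := fun i hi => (mem_filter.mp hi).2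
  obtain ⟨Q, hQU, hQ⟩ := exists_subset_card_eq (s := U) (n := p) (by omega)
  obtain ⟨I, hIQ, hI, hpI⟩ := exists_nonempty_dvd_add_sum hp a0 (fun i hi => hU i (hQU hi)) hQ.ge
  obtain ⟨S, hSU, hpS, hpS2⟩ := exists_subset_dvd_sum_not_sq_dvd hp a
    (fun i hi => hU i (sdiff_subset hi)) (by rw [card_sdiff_of_subset hQU]; omega)
  have hIS : Disjoint I S := disjoint_of_subset_left hIQ (disjoint_sdiff.mono_right hSU)
  have hX : p ^ 2 ∣ a0 + ∑ i ∈ I, a i := hcube I (.inl hI) p hp hpI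
  have hY := hcube (I ∪ S) (.inl (hI.mono subset_union_left)) p hp
  rw [sum_union hIS, ← add_assoc] at hY
  exact hpS2 ((Nat.dvd_add_right hX).mp (hY (dvd_add ((dvd_pow_self p two_ne_zero).trans hX) hpS)))

end HilbertCube

section Counting

lemma sum_log_filter_dvd_le {n : ℕ} (hn : n ≠ 0) {s : Finset ℕ} (hs : ∀ p ∈ s, p.Prime) :
    ∑ p ∈ s with p ∣ n, log p ≤ log n := by
  have hdvd : ∏ p ∈ s with p ∣ n, p ∣ n := prod_primes_dvd n
    (fun p hp => (hs p (mem_filter.mp hp).1).prime) fun p hp => (mem_filter.mp hp).2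
  rw [← log_prod fun p hp => by exact_mod_cast (hs p (mem_filter.mp hp).1).ne_zero, ← Nat.cast_prod]
  exact log_le_log (by exact_mod_cast Nat.pos_of_dvd_of_pos hdvd (Nat.pos_of_ne_zero hn))
    (by exact_mod_cast Nat.le_of_dvd (Nat.pos_of_ne_zero hn) hdvd)

variable {ι : Type*} [Fintype ι] {N K : ℕ} {a : ι → ℕ}

theorem card_sub_mul_theta_le (ha : ∀ i, a i ∈ Icc 1 N)
    (hK : ∀ p, p.Prime → #{i | ¬ p ∣ a i} ≤ K * p) (P : ℕ) :
    ((Fintype.card ι : ℝ) - K * P) * θ P ≤ Fintype.card ι * log N := by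
  have hcount : ∀ p ∈ P.primesLE, (Fintype.card ι : ℝ) - K * P ≤ #{i | p ∣ a i} := by
    intro p hp
    have hsplit := card_filter_add_card_filter_not (s := univ) (fun i => p ∣ a i)
    have hKp : K * p ≤ K * P := Nat.mul_le_mul_left K (Nat.le_of_mem_primesLE hp)
    rw [card_univ] at hsplit
    rw [sub_le_iff_le_add, ← hsplit]
    exact_mod_cast Nat.add_le_add_left ((hK p (Nat.prime_of_mem_primesLE hp)).trans hKp) _
  calc ((Fintype.card ι : ℝ) - K * P) * θ P
      = ∑ p ∈ P.primesLE, ((Fintype.card ι : ℝ) - K * P) * log p := by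
        rw [theta_eq_sum_primesLE_log, mul_sum]
    _ ≤ ∑ p ∈ P.primesLE, (#{i | p ∣ a i} : ℝ) * log p := by
        gcongr with p hp
        exact hcount p hp
    _ = ∑ i, ∑ p ∈ P.primesLE with p ∣ a i, log p := by
        simp only [sum_filter]
        rw [sum_comm]
        simp only [← sum_filter, sum_const, nsmul_eq_mul]
    _ ≤ ∑ i, log (a i) := by
        gcongr with i
        exact sum_log_filter_dvd_le (Nat.one_le_iff_ne_zero.mp (mem_Icc.mp (ha i)).1)
          fun p hp => Nat.prime_of_mem_primesLE hp
    _ ≤ ∑ _i : ι, log N := by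
        gcongr with i
        · exact_mod_cast (mem_Icc.mp (ha i)).1
        · exact_mod_cast (mem_Icc.mp (ha i)).2
    _ = Fintype.card ι * log N := by simp

theorem card_le_mul_log {c : ℝ} (hc : 0 < c) (hθ : ∀ x ≥ 2, c * x ≤ θ x) (hN : 2 ≤ N)
    (ha : ∀ i, a i ∈ Icc 1 N) (hK : ∀ p, p.Prime → #{i | ¬ p ∣ a i} ≤ K * p) :
    (Fintype.card ι : ℝ) ≤ (K + 1) * (4 / c + 6 / log 2) * log N := by
  set n := Fintype.card ι
  -- for this `P`, every prime `p ≤ P` divides at least half of the `a i`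
  set P := n / (2 * (K + 1))
  have hcount := card_sub_mul_theta_le ha hK P
  have hPn : 2 * (K + 1) * (P : ℝ) ≤ n ∧ (n : ℝ) ≤ 2 * (K + 1) * (P + 1) := by
    have hle : P * (2 * (K + 1)) ≤ n := Nat.div_mul_le_self n _
    have hlt : n < 2 * (K + 1) * (P + 1) := Nat.lt_mul_div_succ n (by positivity)
    constructor <;> norm_cast <;> linarith
  have hlogN : 1 ≤ log N / log 2 :=
    (one_le_div (log_pos one_lt_two)).mpr (log_le_log two_pos (by exact_mod_cast hN))
  have hP : (P : ℝ) ≤ 2 + 2 / c * log N := by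
    rcases lt_or_ge (P : ℝ) 2 with hsmall | hlarge
    · have : 0 ≤ 2 / c * log N := by positivity
      linarith
    · have hn : (0 : ℝ) < n := by nlinarith
      have : (n : ℝ) / 2 * (c * P) ≤ n * log N :=
        le_trans (by gcongr <;> nlinarith [hθ P hlarge]) hcount
      have : c * P ≤ 2 * log N := by nlinarith
      have : (P : ℝ) ≤ 2 / c * log N := by
        rw [div_mul_eq_mul_div, le_div_iff₀ hc]; linarith
      linarith
  calc (n : ℝ) ≤ 2 * (K + 1) * (P + 1) := hPn.2
    _ ≤ 2 * (K + 1) * (2 / c * log N + 3 * (log N / log 2)) := by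
        gcongr 2 * (K + 1) * ?_; linarith
    _ = (K + 1) * (4 / c + 6 / log 2) * log N := by ring

end Counting

theorem hilbert_cube_in_powerful : ∃ C : ℝ, 0 < C ∧
    ∀ (N : ℕ), 2 ≤ N → ∀ (d : ℕ) (a0 : ℕ) (a : Fin d → ℕ),
    (∀ i, a i ∈ Finset.Icc 1 N) →
    (∀ I : Finset (Fin d), (I.Nonempty ∨ a0 ≠ 0) → Powerful (a0 + ∑ i ∈ I, a i)) →
    (d : ℝ) ≤ C * Real.log N := by
  obtain ⟨c, hc, hθ⟩ := exists_pos_mul_le_theta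
  refine ⟨(3 + 1) * (4 / c + 6 / log 2), by positivity, fun N hN d a0 a ha hcube => ?_⟩
  have hK : ∀ p, p.Prime → #{i | ¬ p ∣ a i} ≤ 3 * p :=
    fun p hp => (card_filter_not_dvd_lt hp hcube).le
  simpa using card_le_mul_log hc hθ hN ha hK
end

section
/- Suppose an arithmetic progression a+q, a+2q, …, a+ℓq (with a ≥ 0, q ≥ 1, ℓ ≥ 1) consists entirely of perfect powers and Δ = gcd(a,q) > 1. Let r be a prime dividing Δ and write r^α ∥ Δ (i.e., r^α | Δ, r^{α+1} ∤ Δ). Then for each 1 ≤ j ≤ ℓ-1, writing a+qj = x_j^{y_j} with y_j prime, at least one of y_j and y_{j+1} divides α. Consequently, ℓ ≤ 2·Σ_{p | α, p prime} Q_p(ℓ; q, a) + 1, where Q_p(ℓ;q,a) counts the p-th powers among a+q, …, a+ℓq. -/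
/-!
If `r ^ α ∥ gcd a q`, every term `a + j q` is divisible by `r ^ α`, and `r ^ (α + 1)` cannot
divide two consecutive terms since their difference is `q`. A term `x ^ y` with `r ^ α ∥ x ^ y`
has `y ∣ α`, as `y` divides every exponent in the factorization of `x ^ y`. Hence among any two
consecutive terms one is a `p`-th power for a prime `p ∣ α`, and such terms make up at least
half of the progression, up to one.
-/

open Finset

theorem Nat.factorization_eq_of_pow_dvd_of_not_pow_succ_dvd {r n α : ℕ} (hr : r.Prime)
    (h : r ^ α ∣ n) (h' : ¬ r ^ (α + 1) ∣ n) : n.factorization r = α := by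
  have hn : n ≠ 0 := by rintro rfl; exact h' (dvd_zero _)
  have hle := (hr.pow_dvd_iff_le_factorization hn).mp h
  have hlt := mt (hr.pow_dvd_iff_le_factorization hn).mpr h'
  omega

theorem Nat.dvd_of_pow_dvd_pow_of_not_pow_succ_dvd_pow {r α x y : ℕ} (hr : r.Prime)
    (h : r ^ α ∣ x ^ y) (h' : ¬ r ^ (α + 1) ∣ x ^ y) : y ∣ α := by
  rw [← Nat.factorization_eq_of_pow_dvd_of_not_pow_succ_dvd hr h h', Nat.factorization_pow]
  exact Dvd.intro _ rfl

theorem Nat.dvd_gcd_of_dvd_add_mul_of_dvd_add_succ_mul {m a q j : ℕ}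
    (h : m ∣ a + j * q) (h' : m ∣ a + (j + 1) * q) : m ∣ Nat.gcd a q := by
  have hq : m ∣ q := by
    rw [add_one_mul, ← add_assoc] at h'
    exact (Nat.dvd_add_right h).mp h'
  exact Nat.dvd_gcd ((Nat.dvd_add_left (hq.mul_left j)).mp h) hq

theorem dvd_or_dvd_of_pow_eq_add_mul {a q r α j x y x' y' : ℕ} (hr : r.Prime)
    (hα : r ^ α ∣ Nat.gcd a q) (hα' : ¬ r ^ (α + 1) ∣ Nat.gcd a q)
    (hxy : x ^ y = a + j * q) (hxy' : x' ^ y' = a + (j + 1) * q) : y ∣ α ∨ y' ∣ α := by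
  have hterm (i : ℕ) : r ^ α ∣ a + i * q :=
    dvd_add (hα.trans (Nat.gcd_dvd_left a q)) ((hα.trans (Nat.gcd_dvd_right a q)).mul_left i)
  by_cases hj : r ^ (α + 1) ∣ a + j * q
  · refine .inr (Nat.dvd_of_pow_dvd_pow_of_not_pow_succ_dvd_pow (x := x') hr ?_ ?_) <;> rw [hxy']
    · exact hterm (j + 1)
    · exact fun hj' => hα' (Nat.dvd_gcd_of_dvd_add_mul_of_dvd_add_succ_mul hj hj')
  · refine .inl (Nat.dvd_of_pow_dvd_pow_of_not_pow_succ_dvd_pow (x := x) hr ?_ ?_) <;> rw [hxy]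
    · exact hterm j
    · exact hj

theorem exists_prime_pow_eq_pow {M : Type*} [Monoid M] (x : M) {k : ℕ} (hk : k ≠ 1) :
    ∃ p y, p.Prime ∧ y ^ p = x ^ k := by
  refine ⟨k.minFac, x ^ (k / k.minFac), Nat.minFac_prime hk, ?_⟩
  rw [← pow_mul, Nat.div_mul_cancel (Nat.minFac_dvd k)]

theorem le_two_mul_card_filter_Icc_add_one (P : ℕ → Prop) [DecidablePred P] (ℓ : ℕ)
    (hP : ∀ j, 1 ≤ j → j + 1 ≤ ℓ → P j ∨ P (j + 1)) :
    ℓ ≤ 2 * #{j ∈ Icc 1 ℓ | P j} + 1 := by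
  induction ℓ using Nat.strong_induction_on with
  | _ ℓ ih =>
    obtain hℓ | ⟨m, rfl⟩ : ℓ ≤ 1 ∨ ∃ m, ℓ = m + 2 := by
      rcases ℓ with _ | _ | m <;> simp
    · omega
    have hsub : {j ∈ Icc 1 m | P j} ⊂ {j ∈ Icc 1 (m + 2) | P j} := by
      refine (ssubset_iff_of_subset <|
        filter_subset_filter _ (Icc_subset_Icc_right (by omega))).mpr ?_
      rcases hP (m + 1) (by omega) le_rfl with h | h
      · exact ⟨m + 1, by simp [h], by simp⟩
      · exact ⟨m + 2, by simp [h], by simp⟩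
    have := ih m (by omega) fun j hj hjm => hP j hj (by omega)
    have := card_lt_card hsub
    omega

theorem card_filter_exists_le_sum {ι α : Type*} (s : Finset ι) (t : Finset α) (Q : ι → α → Prop)
    [∀ i, DecidablePred (Q i)] [DecidablePred fun a => ∃ i ∈ s, Q i a] :
    #{a ∈ t | ∃ i ∈ s, Q i a} ≤ ∑ i ∈ s, #{a ∈ t | Q i a} := by
  classical
  calc #{a ∈ t | ∃ i ∈ s, Q i a} ≤ #(s.biUnion fun i => {a ∈ t | Q i a}) :=
        card_le_card fun a ha => by
          obtain ⟨hat, i, hi, hQ⟩ := mem_filter.mp ha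
          exact mem_biUnion.mpr ⟨i, hi, mem_filter.mpr ⟨hat, hQ⟩⟩
    _ ≤ _ := card_biUnion_le

open scoped Classical in
theorem ap_of_perfect_powers_exponents_general (a q ℓ : ℕ)
    (hpp : ∀ j ∈ Finset.Icc 1 ℓ, ∃ x k : ℕ, 2 ≤ k ∧ x ^ k = a + j * q)
    (Δ : ℕ) (hΔ : Δ = Nat.gcd a q)
    (r : ℕ) (hr : r.Prime) (hrΔ : r ∣ Δ)
    (α : ℕ) (hα : r ^ α ∣ Δ) (hα' : ¬ r ^ (α + 1) ∣ Δ) :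
    (∀ j, 1 ≤ j → j + 1 ≤ ℓ → ∀ x y x' y' : ℕ, y.Prime → y'.Prime →
        x ^ y = a + j * q → x' ^ y' = a + (j + 1) * q → y ∣ α ∨ y' ∣ α) ∧
      ℓ ≤ 2 * (∑ p ∈ α.primeFactors,
        ((Finset.Icc 1 ℓ).filter (fun j => ∃ x : ℕ, x ^ p = a + j * q)).card) + 1 := by
  subst hΔ
  have hα0 : α ≠ 0 := by rintro rfl; exact hα' (by simpa using hrΔ)
  have hprime_pow (j : ℕ) (hj : j ∈ Icc 1 ℓ) : ∃ p x, p.Prime ∧ x ^ p = a + j * q := by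
    obtain ⟨x, k, hk, hxk⟩ := hpp j hj
    obtain ⟨p, y, hp, hy⟩ := exists_prime_pow_eq_pow x (k := k) (by omega)
    exact ⟨p, y, hp, hy.trans hxk⟩
  refine ⟨fun j _ _ x y x' y' _ _ => dvd_or_dvd_of_pow_eq_add_mul hr hα hα', ?_⟩
  calc ℓ ≤ 2 * #{j ∈ Icc 1 ℓ | ∃ p ∈ α.primeFactors, ∃ x, x ^ p = a + j * q} + 1 := by
        refine le_two_mul_card_filter_Icc_add_one _ ℓ fun j hj hjℓ => ?_
        obtain ⟨p, x, hp, hx⟩ := hprime_pow j (mem_Icc.mpr ⟨hj, by omega⟩)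
        obtain ⟨p', x', hp', hx'⟩ := hprime_pow (j + 1) (mem_Icc.mpr ⟨by omega, hjℓ⟩)
        rcases dvd_or_dvd_of_pow_eq_add_mul hr hα hα' hx hx' with h | h
        · exact .inl ⟨p, Nat.mem_primeFactors.mpr ⟨hp, h, hα0⟩, x, hx⟩
        · exact .inr ⟨p', Nat.mem_primeFactors.mpr ⟨hp', h, hα0⟩, x', hx'⟩
    _ ≤ _ := by grw [card_filter_exists_le_sum]

open scoped Classical in
theorem ap_of_perfect_powers_exponents (a q ℓ : ℕ) (hq : 1 ≤ q) (hℓ : 1 ≤ ℓ)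
    (hpp : ∀ j ∈ Finset.Icc 1 ℓ, ∃ x k : ℕ, 2 ≤ k ∧ x ^ k = a + j * q)
    (Δ : ℕ) (hΔ : Δ = Nat.gcd a q) (hΔ1 : 1 < Δ)
    (r : ℕ) (hr : r.Prime) (hrΔ : r ∣ Δ)
    (α : ℕ) (hα : r ^ α ∣ Δ) (hα' : ¬ r ^ (α + 1) ∣ Δ) :
    (∀ j, 1 ≤ j → j + 1 ≤ ℓ → ∀ x y x' y' : ℕ, y.Prime → y'.Prime →
        x ^ y = a + j * q → x' ^ y' = a + (j + 1) * q → y ∣ α ∨ y' ∣ α) ∧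
      ℓ ≤ 2 * (∑ p ∈ α.primeFactors,
        ((Finset.Icc 1 ℓ).filter (fun j => ∃ x : ℕ, x ^ p = a + j * q)).card) + 1 :=
  ap_of_perfect_powers_exponents_general a q ℓ hpp Δ hΔ r hr hrΔ α hα hα'
end
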